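/- arXiv:2410.18360 — 7 statements merged into one kernel-verified Lean document; each statement's English description precedes it below -/
import Mathlib

section
/- Let g be a finite-dimensional Lie algebra over a field k of characteristic zero and let (e,h,f) be an sl2-triple in g (i.e. [h,e] = 2e, [h,f] = -2f, [e,f] = h). Then ad h : g → g is diagonalizable with all eigenvalues integers; that is, g decomposes as a direct sum g = ⊕_{i ∈ ℤ} g(i), where g(i) = {x ∈ g : [h,x] = i·x}. -/
set_option linter.unusedSectionVars false

open Polynomial Module

section Aux

variable {k V : Type*} [Field k] [AddCommGroup V] [Module k V]

lemma aeval_apply_eigen (A : Module.End k V) {μ : k} {x : V} (hx : A x = μ • x) (q : k[X]) :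
    aeval A q x = q.eval μ • x := by
  have hpow : ∀ m : ℕ, (A ^ m) x = μ ^ m • x := by
    intro m
    induction m with
    | zero => simp
    | succ m ih =>
        rw [pow_succ', Module.End.mul_apply, ih, map_smul, hx, smul_smul, pow_succ']
        ring_nf
  induction q using Polynomial.induction_on' with
  | add p q hp hq => simp [hp, hq, add_smul]
  | monomial m a =>
      simp [aeval_monomial, Module.End.mul_apply, Module.algebraMap_end_apply, hpow,
        eval_monomial, smul_smul, mul_comm]

lemma aeval_mem (A : Module.End k V) (p : Submodule k V) (hp : ∀ x ∈ p, A x ∈ p) (q : k[X])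
    {x : V} (hx : x ∈ p) : aeval A q x ∈ p := by
  have hpow : ∀ m : ℕ, (A ^ m) x ∈ p := by
    intro m
    induction m with
    | zero => simpa
    | succ m ih => rw [pow_succ', Module.End.mul_apply]; exact hp _ ih
  induction q using Polynomial.induction_on' with
  | add p q hp hq => rw [map_add, LinearMap.add_apply]; exact add_mem hp hq
  | monomial m a =>
      rw [aeval_monomial, Module.End.mul_apply, Module.algebraMap_end_apply]
      exact Submodule.smul_mem _ _ (hpow m)

/-- If a product of distinct linear factors annihilates `x` belonging to an `A`-invariant
subspace `K`, then `x` lies in the sum of the eigenspaces intersected with `K`. -/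
lemma mem_iSup_eigenspace_inf (A : Module.End k V) (K : Submodule k V)
    (hK : ∀ x ∈ K, A x ∈ K) (s : Finset k) :
    ∀ x ∈ K, aeval A (∏ μ ∈ s, (X - C μ)) x = 0 →
      x ∈ ⨆ μ ∈ s, (Module.End.eigenspace A μ ⊓ K) := by
  classical
  induction s using Finset.induction_on with
  | empty =>
      intro x hx h
      simpa using h
  | @insert μ t hμt ih =>
      intro x hx h
      have hd : (∏ ν ∈ t, (μ - ν)) ≠ 0 := by
        refine Finset.prod_ne_zero_iff.mpr fun ν hν => sub_ne_zero.mpr ?_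
        rintro rfl; exact hμt hν
      set w : V := aeval A (∏ ν ∈ t, (X - C ν)) x with hw
      set z : V := (∏ ν ∈ t, (μ - ν))⁻¹ • w with hz
      have hwK : w ∈ K := aeval_mem A K hK _ hx
      have hzK : z ∈ K := Submodule.smul_mem _ _ hwK
      have hAw : A w = μ • w := by
        have : aeval A ((X - C μ) * ∏ ν ∈ t, (X - C ν)) x = 0 := by
          rwa [Finset.prod_insert hμt] at h
        rw [map_mul, Module.End.mul_apply, ← hw, map_sub, LinearMap.sub_apply, aeval_X,
          aeval_C, Module.algebraMap_end_apply, sub_eq_zero] at this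
        exact this
      have hAz : A z = μ • z := by rw [hz, map_smul, hAw, smul_comm]
      have hxz : aeval A (∏ ν ∈ t, (X - C ν)) (x - z) = 0 := by
        have h1 : aeval A (∏ ν ∈ t, (X - C ν)) z = (∏ ν ∈ t, (μ - ν)) • z := by
          rw [aeval_apply_eigen A hAz]
          congr 1
          simp [eval_prod]
        rw [map_sub, h1, hz, smul_smul, mul_inv_cancel₀ hd, one_smul, ← hw, sub_self]
      have hmem := ih (x - z) (Submodule.sub_mem _ hx hzK) hxz
      have hx' : x = z + (x - z) := by abel
      rw [hx']
      refine Submodule.add_mem _ ?_ ?_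
      · apply Submodule.mem_iSup_of_mem μ
        apply Submodule.mem_iSup_of_mem (Finset.mem_insert_self μ t)
        exact ⟨Module.End.mem_eigenspace_iff.mpr hAz, hzK⟩
      · have hle : (⨆ ν ∈ t, (Module.End.eigenspace A ν ⊓ K)) ≤
            ⨆ ν ∈ (insert μ t : Finset k), (Module.End.eigenspace A ν ⊓ K) :=
          biSup_mono fun ν hν => Finset.mem_insert_of_mem hν
        exact hle hmem

attribute [local instance] LieRing.ofAssociativeRing

/-- An operator `E` with `[A, E] = 2E` in a finite-dimensional space is nilpotent. -/
lemma exists_pow_eq_zero_of_bracket [CharZero k] [FiniteDimensional k V]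
    (A E : Module.End k V) (hAE : ∀ x, A (E x) = E (A x) + (2 : k) • E x) :
    ∃ N : ℕ, E ^ N = 0 := by
  have key : ∀ n : ℕ, ∀ x, A ((E ^ n) x) = (E ^ n) (A x) + ((2 * n : ℕ) : k) • (E ^ n) x := by
    intro n
    induction n with
    | zero => simp
    | succ n ih =>
        intro x
        rw [pow_succ', Module.End.mul_apply, hAE, ih, map_add, map_smul,
          ← Module.End.mul_apply E (E ^ n), ← pow_succ']
        push_cast
        module
  by_contra hcon
  push_neg at hcon
  have hinj : Function.Injective (fun n : ℕ => ((2 * n : ℕ) : k)) := by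
    intro a b hab
    simpa using Nat.cast_injective (R := k) hab
  have hli := (LieAlgebra.ad k (Module.End k V) A).eigenvectors_linearIndependent'
      (fun n : ℕ => ((2 * n : ℕ) : k)) hinj (fun n => E ^ n) ?_
  · exact Module.Finite.not_linearIndependent_of_infinite _ hli
  · intro n
    constructor
    · rw [Module.End.mem_eigenspace_iff]
      ext x
      simp only [LieAlgebra.ad_apply, Ring.lie_def, LinearMap.sub_apply, Module.End.mul_apply,
        LinearMap.smul_apply, key n x]
      abel
    · exact hcon n

end Aux

section Triple

variable {k V : Type*} [Field k] [CharZero k] [AddCommGroup V] [Module k V]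
variable (E A F : Module.End k V)
variable (hAE : ∀ x, A (E x) = E (A x) + (2 : k) • E x)
variable (hAF : ∀ x, A (F x) = F (A x) - (2 : k) • F x)
variable (hEF : ∀ x, E (F x) = F (E x) + A x)

section Identities
include hAF in
lemma triple_AFpow : ∀ (j : ℕ) (x : V),
    A ((F ^ j) x) = (F ^ j) (A x) - ((2 * j : ℕ) : k) • (F ^ j) x := by
  intro j
  induction j with
  | zero => simp
  | succ j ih =>
      intro x
      rw [pow_succ', Module.End.mul_apply, hAF, ih, map_sub, map_smul,
        ← Module.End.mul_apply F (F ^ j), ← pow_succ']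
      push_cast
      module

include hAF hEF in
lemma triple_EFpow : ∀ (j : ℕ) (x : V),
    E ((F ^ (j + 1)) x) =
      (F ^ (j + 1)) (E x) + ((j : k) + 1) • (F ^ j) (A x - (j : k) • x) := by
  intro j
  induction j with
  | zero => intro x; simp [hEF x]
  | succ j ih =>
      intro x
      have h4 : ∀ (i : ℕ) (y : V), (F ^ i) (F y) = (F ^ (i + 1)) y := by
        intro i y; rw [← Module.End.mul_apply (F ^ i) F, ← pow_succ]
      have h1 : (F ^ (j + 1 + 1)) x = (F ^ (j + 1)) (F x) := (h4 (j+1) x).symm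
      rw [h1, ih (F x), hEF x, hAF x]
      simp only [map_add, map_sub, map_smul, h4]
      push_cast
      match_scalars <;> ring

include hAE in
lemma triple_ker_E_A_stable {x : V} (hx : E x = 0) : E (A x) = 0 := by
  have := hAE x
  rw [hx, map_zero, smul_zero, add_zero] at this
  exact this.symm

include hAE hAF hEF in
lemma triple_EpowFpow : ∀ (m : ℕ) (x : V), E x = 0 →
    (E ^ m) ((F ^ m) x) =
      ((m.factorial : ℕ) : k) • aeval A (∏ i ∈ Finset.range m, (X - C (i : k))) x := by
  intro m
  induction m with
  | zero => intro x _; simp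
  | succ m ih =>
      intro x hx
      have h1 : (E ^ (m + 1)) ((F ^ (m + 1)) x) = (E ^ m) (E ((F ^ (m + 1)) x)) := by
        rw [← Module.End.mul_apply (E ^ m) E, ← pow_succ]
      rw [h1, triple_EFpow E A F hAF hEF m x, hx, map_zero, zero_add, map_smul]
      have hx' : E (A x - (m : k) • x) = 0 := by
        rw [map_sub, map_smul, hx, smul_zero, sub_zero, triple_ker_E_A_stable E A hAE hx]
      rw [ih _ hx']
      rw [Finset.prod_range_succ, map_mul, Module.End.mul_apply]
      have h2 : aeval A (X - C (m : k)) x = A x - (m : k) • x := by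
        rw [map_sub, LinearMap.sub_apply, aeval_X, aeval_C, Module.algebraMap_end_apply]
      rw [h2, smul_smul]
      congr 1
      rw [Nat.factorial_succ]
      push_cast
      ring

include hAE hAF hEF in
lemma triple_kerE_ann {N : ℕ} (hFN : F ^ N = 0) {x : V} (hx : E x = 0) :
    aeval A (∏ i ∈ Finset.range N, (X - C (i : k))) x = 0 := by
  have := triple_EpowFpow E A F hAE hAF hEF N x hx
  rw [hFN] at this
  simp only [LinearMap.zero_apply, map_zero] at this
  have hne : ((N.factorial : ℕ) : k) ≠ 0 := by
    exact_mod_cast Nat.cast_ne_zero.mpr (Nat.factorial_ne_zero N)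
  exact (smul_eq_zero.mp this.symm).resolve_left hne

include hAE hAF hEF in
/-- The string through a primitive vector of weight `n` has length `n + 1`. -/
lemma triple_string {N : ℕ} (hFN : F ^ N = 0) {n : ℕ} {u : V} (hu : E u = 0)
    (hn : A u = (n : k) • u) : (F ^ (n + 1)) u = 0 := by
  rcases eq_or_ne u 0 with rfl | hu0
  · simp
  have hex : ∃ m : ℕ, (F ^ m) u = 0 := ⟨N, by rw [hFN]; rfl⟩
  classical
  have hm₀pos : Nat.find hex ≠ 0 := by
    intro h
    have := Nat.find_spec hex
    rw [h] at this
    simp at this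
    exact hu0 this
  obtain ⟨j, hj⟩ : ∃ j, Nat.find hex = j + 1 :=
    ⟨Nat.find hex - 1, (Nat.succ_pred_eq_of_pos (Nat.pos_of_ne_zero hm₀pos)).symm⟩
  have hm₀0 : (F ^ (j + 1)) u = 0 := by rw [← hj]; exact Nat.find_spec hex
  have hFj : (F ^ j) u ≠ 0 := Nat.find_min hex (by omega)
  have hEF0 : E ((F ^ (j + 1)) u) = 0 := by rw [hm₀0, map_zero]
  rw [triple_EFpow E A F hAF hEF j u, hu, map_zero, zero_add, hn, ← sub_smul, map_smul,
    smul_smul] at hEF0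
  have hcoef : ((j : k) + 1) * ((n : k) - (j : k)) = 0 := by
    by_contra hc
    exact hFj ((smul_eq_zero.mp hEF0).resolve_left hc)
  have hj2 : (n : k) = (j : k) := by
    rcases mul_eq_zero.mp hcoef with h | h
    · exact absurd h (Nat.cast_add_one_ne_zero j)
    · exact sub_eq_zero.mp h
  have : n = j := Nat.cast_injective hj2
  rw [this]
  exact hm₀0

end Identities

end Triple

section Key

variable {k V : Type*} [Field k] [CharZero k] [AddCommGroup V] [Module k V]
  [FiniteDimensional k V]

theorem triple_iSup_eigenspace_eq_top (E A F : Module.End k V)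
    (hAE : ∀ x, A (E x) = E (A x) + (2 : k) • E x)
    (hAF : ∀ x, A (F x) = F (A x) - (2 : k) • F x)
    (hEF : ∀ x, E (F x) = F (E x) + A x) :
    (⨆ i : ℤ, Module.End.eigenspace A (i : k)) = ⊤ := by
  classical
  obtain ⟨NE, hNE⟩ := exists_pow_eq_zero_of_bracket A E hAE
  obtain ⟨NF, hNF⟩ := exists_pow_eq_zero_of_bracket (-A) F
    (fun x => by rw [LinearMap.neg_apply, LinearMap.neg_apply, hAF x, map_neg]; module)
  set U : ℕ → Submodule k V := fun n => Module.End.eigenspace A (n : k) ⊓ LinearMap.ker E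
    with hUdef
  have hUeig : ∀ {n : ℕ} {u : V}, u ∈ U n → A u = (n : k) • u := fun hu =>
    Module.End.mem_eigenspace_iff.mp hu.1
  have hUker : ∀ {n : ℕ} {u : V}, u ∈ U n → E u = 0 := fun hu => hu.2
  set M : Submodule k V := ⨆ (n : ℕ) (_ : n < NF) (j : ℕ), Submodule.map (F ^ j) (U n)
    with hMdef
  have hgen : ∀ {n : ℕ}, n < NF → ∀ (j : ℕ) {u : V}, u ∈ U n → (F ^ j) u ∈ M := by
    intro n hn j u hu
    refine Submodule.mem_iSup_of_mem n (Submodule.mem_iSup_of_mem hn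
      (Submodule.mem_iSup_of_mem j ?_))
    exact Submodule.mem_map_of_mem hu
  -- eigenvalue of F^j u
  have heigFj : ∀ {n : ℕ} {u : V}, u ∈ U n → ∀ j : ℕ,
      A ((F ^ j) u) = ((n : k) - (2 * j : ℕ)) • (F ^ j) u := by
    intro n u hu j
    rw [triple_AFpow A F hAF j u, hUeig hu, map_smul, sub_smul]
  -- E on generators
  have hEgen : ∀ {n : ℕ} {u : V}, u ∈ U n → ∀ j : ℕ,
      E ((F ^ (j + 1)) u) = (((j : k) + 1) * ((n : k) - (j : k))) • (F ^ j) u := by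
    intro n u hu j
    rw [triple_EFpow E A F hAF hEF j u, hUker hu, map_zero, zero_add, hUeig hu, ← sub_smul,
      map_smul, smul_smul]
  -- M is invariant
  have hEM : ∀ x ∈ M, E x ∈ M := by
    intro x hx
    have : M ≤ Submodule.comap E M := by
      refine iSup_le fun n => iSup_le fun hn => iSup_le fun j => ?_
      rw [Submodule.map_le_iff_le_comap]
      intro u hu
      simp only [Submodule.mem_comap, LinearMap.comp_apply]
      cases j with
      | zero =>
          have : E ((F ^ 0) u) = 0 := by simpa using hUker hu
          rw [this]; exact Submodule.zero_mem M
      | succ j =>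
          rw [hEgen hu j]
          exact Submodule.smul_mem M _ (hgen hn j hu)
    exact this hx
  have hAM : ∀ x ∈ M, A x ∈ M := by
    intro x hx
    have : M ≤ Submodule.comap A M := by
      refine iSup_le fun n => iSup_le fun hn => iSup_le fun j => ?_
      rw [Submodule.map_le_iff_le_comap]
      intro u hu
      simp only [Submodule.mem_comap]
      rw [heigFj hu j]
      exact Submodule.smul_mem M _ (hgen hn j hu)
    exact this hx
  have hFM : ∀ x ∈ M, F x ∈ M := by
    intro x hx
    have : M ≤ Submodule.comap F M := by
      refine iSup_le fun n => iSup_le fun hn => iSup_le fun j => ?_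
      rw [Submodule.map_le_iff_le_comap]
      intro u hu
      simp only [Submodule.mem_comap]
      have : F ((F ^ j) u) = (F ^ (j + 1)) u := by
        rw [← Module.End.mul_apply F (F ^ j), ← pow_succ']
      rw [this]
      exact hgen hn (j + 1) hu
    exact this hx
  -- ker E ≤ M
  have hUM : LinearMap.ker E ≤ M := by
    intro x hx
    have hx0 : E x = 0 := hx
    have hann := triple_kerE_ann E A F hAE hAF hEF hNF hx0
    have hKinv : ∀ y ∈ LinearMap.ker E, A y ∈ LinearMap.ker E := by
      intro y hy
      exact LinearMap.mem_ker.mpr (triple_ker_E_A_stable E A hAE (LinearMap.mem_ker.mp hy))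
    have hprod : (∏ μ ∈ (Finset.range NF).image (fun i : ℕ => (i : k)), (X - C μ)) =
        ∏ i ∈ Finset.range NF, (X - C (i : k)) := by
      rw [Finset.prod_image]
      intro a _ b _ hab
      exact Nat.cast_injective hab
    have hsplit := mem_iSup_eigenspace_inf A (LinearMap.ker E) hKinv
      ((Finset.range NF).image (fun i : ℕ => (i : k))) x hx (by rw [hprod]; exact hann)
    refine (iSup_le fun μ => iSup_le fun hμ => ?_ :
      (⨆ μ ∈ (Finset.range NF).image (fun i : ℕ => (i : k)),
        (Module.End.eigenspace A μ ⊓ LinearMap.ker E)) ≤ M) hsplit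
    obtain ⟨i, hi, rfl⟩ := Finset.mem_image.mp hμ
    intro y hy
    have : ((F : Module.End k V) ^ 0) y ∈ M := hgen (Finset.mem_range.mp hi) 0 hy
    simpa using this
  -- P = E(M)
  set P : Submodule k V := Submodule.map E M with hPdef
  have hAP : ∀ x ∈ P, A x ∈ P := by
    rintro x ⟨m, hm, rfl⟩
    have h1 : A (E m) = E (A m) + (2 : k) • E m := hAE m
    rw [h1]
    exact Submodule.add_mem P (Submodule.mem_map_of_mem (hAM m hm))
      (Submodule.smul_mem P _ (Submodule.mem_map_of_mem hm))
  -- key annihilation: g(A) maps M into P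
  set g : k[X] := ∏ m ∈ Finset.range NF, (X + C (m : k)) with hgdef
  have hgP : ∀ x ∈ M, aeval A g x ∈ P := by
    intro x hx
    have : M ≤ Submodule.comap (aeval A g) M ⊓ Submodule.comap (aeval A g) P := by
      refine iSup_le fun n => iSup_le fun hn => iSup_le fun j => ?_
      rw [Submodule.map_le_iff_le_comap]
      intro u hu
      simp only [Submodule.mem_comap, Submodule.mem_inf]
      rcases lt_or_ge j (n + 1) with hj | hj
      · -- j ≤ n : F^j u is an eigenvector
        have heig : A ((F ^ j) u) = ((n : k) - (2 * j : ℕ)) • (F ^ j) u := heigFj hu j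
        rw [aeval_apply_eigen A heig g]
        rcases Nat.lt_succ_iff_lt_or_eq.mp hj with hjn | hjn
        · -- j < n : F^j u ∈ P
          have hc : (((j : k) + 1) * ((n : k) - (j : k))) ≠ 0 := by
            apply mul_ne_zero (Nat.cast_add_one_ne_zero j)
            rw [sub_ne_zero]
            intro hnj
            exact (Nat.lt_irrefl j) (Nat.cast_injective hnj ▸ hjn)
          have hmem : (F ^ j) u ∈ P := by
            refine ⟨(((j : k) + 1) * ((n : k) - (j : k)))⁻¹ • (F ^ (j + 1)) u,
              Submodule.smul_mem M _ (hgen hn (j + 1) hu), ?_⟩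
            rw [map_smul, hEgen hu j, smul_smul, inv_mul_cancel₀ hc, one_smul]
          exact ⟨Submodule.smul_mem M _ (hgen hn j hu), Submodule.smul_mem P _ hmem⟩
        · -- j = n : eval g at -(n) is zero
          subst hjn
          have hzero : g.eval ((j : k) - (2 * j : ℕ)) = 0 := by
            rw [hgdef, eval_prod]
            refine Finset.prod_eq_zero (Finset.mem_range.mpr hn) ?_
            simp only [eval_add, eval_X, eval_C]
            push_cast
            ring
          rw [hzero, zero_smul]
          exact ⟨Submodule.zero_mem M, Submodule.zero_mem P⟩
      · -- j > n : F^j u = 0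
        have hstr : (F ^ (n + 1)) u = 0 :=
          triple_string E A F hAE hAF hEF hNF (hUker hu) (hUeig hu)
        obtain ⟨d, rfl⟩ : ∃ d, j = d + (n + 1) := ⟨j - (n + 1), by omega⟩
        have : (F ^ (d + (n + 1))) u = 0 := by
          rw [pow_add, Module.End.mul_apply, hstr, map_zero]
        rw [this, map_zero]
        exact ⟨Submodule.zero_mem M, Submodule.zero_mem P⟩
    exact (this hx).2
  -- crux : M = ⊤
  have hMtop : M = ⊤ := by
    by_contra hMT
    haveI : Nontrivial (V ⧸ M) := Submodule.Quotient.nontrivial_iff.mpr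
      (lt_top_iff_ne_top.mpr hMT).ne
    have hEc : M ≤ Submodule.comap E M := fun x hx => hEM x hx
    have hAc : M ≤ Submodule.comap A M := fun x hx => hAM x hx
    have hFc : M ≤ Submodule.comap F M := fun x hx => hFM x hx
    set π : V →ₗ[k] V ⧸ M := M.mkQ with hπdef
    set Eb : Module.End k (V ⧸ M) := M.mapQ M E hEc with hEbdef
    set Ab : Module.End k (V ⧸ M) := M.mapQ M A hAc with hAbdef
    set Fb : Module.End k (V ⧸ M) := M.mapQ M F hFc with hFbdef
    have hπs : Function.Surjective π := Submodule.mkQ_surjective M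
    have hEb : ∀ x : V, Eb (π x) = π (E x) := fun x => by
      simp [hEbdef, hπdef, Submodule.mapQ_apply, Submodule.mkQ_apply]
    have hAb : ∀ x : V, Ab (π x) = π (A x) := fun x => by
      simp [hAbdef, hπdef, Submodule.mapQ_apply, Submodule.mkQ_apply]
    have hFb : ∀ x : V, Fb (π x) = π (F x) := fun x => by
      simp [hFbdef, hπdef, Submodule.mapQ_apply, Submodule.mkQ_apply]
    have hAEb : ∀ y, Ab (Eb y) = Eb (Ab y) + (2 : k) • Eb y := by
      intro y; obtain ⟨x, rfl⟩ := hπs y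
      rw [hEb, hAb, hAb, hEb, ← map_smul, ← map_add, hAE]
    have hAFb : ∀ y, Ab (Fb y) = Fb (Ab y) - (2 : k) • Fb y := by
      intro y; obtain ⟨x, rfl⟩ := hπs y
      rw [hFb, hAb, hAb, hFb, ← map_smul, ← map_sub, hAF]
    have hEFb : ∀ y, Eb (Fb y) = Fb (Eb y) + Ab y := by
      intro y; obtain ⟨x, rfl⟩ := hπs y
      rw [hFb, hEb, hEb, hFb, hAb, ← map_add, hEF]
    have hpowE : ∀ (m : ℕ) (x : V), (Eb ^ m) (π x) = π ((E ^ m) x) := by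
      intro m
      induction m with
      | zero => intro x; simp
      | succ m ih =>
          intro x
          rw [pow_succ', Module.End.mul_apply, ih x, hEb, pow_succ', Module.End.mul_apply]
    have hpowF : ∀ (m : ℕ) (x : V), (Fb ^ m) (π x) = π ((F ^ m) x) := by
      intro m
      induction m with
      | zero => intro x; simp
      | succ m ih =>
          intro x
          rw [pow_succ', Module.End.mul_apply, ih x, hFb, pow_succ', Module.End.mul_apply]
    have hFbN : Fb ^ NF = 0 := by
      apply LinearMap.ext
      intro y
      obtain ⟨x, rfl⟩ := hπs y
      rw [hpowF NF x, hNF]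
      simp
    -- a nonzero element of ker Eb
    obtain ⟨y0, hy0⟩ := exists_ne (0 : V ⧸ M)
    have hexE : ∃ t, (Eb ^ t) y0 = 0 := by
      refine ⟨NE, ?_⟩
      obtain ⟨x, rfl⟩ := hπs y0
      rw [hpowE NE x, hNE]
      simp
    classical
    have ht0 : Nat.find hexE ≠ 0 := by
      intro h
      have := Nat.find_spec hexE
      rw [h] at this
      simp at this
      exact hy0 this
    obtain ⟨t, ht⟩ : ∃ t, Nat.find hexE = t + 1 :=
      ⟨Nat.find hexE - 1, (Nat.succ_pred_eq_of_pos (Nat.pos_of_ne_zero ht0)).symm⟩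
    set z : V ⧸ M := (Eb ^ t) y0 with hzdef
    have hz0 : z ≠ 0 := Nat.find_min hexE (by omega)
    have hEz : Eb z = 0 := by
      rw [hzdef, ← Module.End.mul_apply, ← pow_succ', ← ht]
      exact Nat.find_spec hexE
    -- z is annihilated by the product polynomial
    have hann := triple_kerE_ann Eb Ab Fb hAEb hAFb hEFb hFbN hEz
    have hKinv : ∀ y ∈ LinearMap.ker Eb, Ab y ∈ LinearMap.ker Eb := by
      intro y hy
      exact LinearMap.mem_ker.mpr (triple_ker_E_A_stable Eb Ab hAEb (LinearMap.mem_ker.mp hy))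
    have hprod : (∏ μ ∈ (Finset.range NF).image (fun i : ℕ => (i : k)), (X - C μ)) =
        ∏ i ∈ Finset.range NF, (X - C (i : k)) := by
      rw [Finset.prod_image]
      intro a _ b _ hab
      exact Nat.cast_injective hab
    have hsplit := mem_iSup_eigenspace_inf Ab (LinearMap.ker Eb) hKinv
      ((Finset.range NF).image (fun i : ℕ => (i : k))) z (LinearMap.mem_ker.mpr hEz)
      (by rw [hprod]; exact hann)
    -- extract a nonzero eigenvector in ker Eb
    have hnotbot : ¬ (⨆ μ ∈ (Finset.range NF).image (fun i : ℕ => (i : k)),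
        (Module.End.eigenspace Ab μ ⊓ LinearMap.ker Eb)) = ⊥ := by
      intro h
      rw [h] at hsplit
      exact hz0 (Submodule.mem_bot k |>.mp hsplit)
    have hexμ : ∃ μ ∈ (Finset.range NF).image (fun i : ℕ => (i : k)),
        (Module.End.eigenspace Ab μ ⊓ LinearMap.ker Eb) ≠ ⊥ := by
      by_contra hc
      push_neg at hc
      exact hnotbot (by simp only [iSup_eq_bot]; exact fun μ hμ' => hc μ hμ')
    obtain ⟨μ, hμmem, hμ⟩ := hexμ
    obtain ⟨n, _, rfl⟩ := Finset.mem_image.mp hμmem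
    obtain ⟨y, hy, hyne⟩ := Submodule.exists_mem_ne_zero_of_ne_bot hμ
    have hyeig : Ab y = (n : k) • y := Module.End.mem_eigenspace_iff.mp hy.1
    have hyker : Eb y = 0 := hy.2
    -- lift y
    obtain ⟨x, rfl⟩ := hπs y
    have hmemM : ∀ w : V, π w = 0 ↔ w ∈ M := by
      intro w
      rw [hπdef, ← LinearMap.mem_ker, Submodule.ker_mkQ]
    have hEx : E x ∈ M := by
      rw [← hmemM, ← hEb]
      exact hyker
    have hAx : A x - (n : k) • x ∈ M := by
      rw [← hmemM, map_sub, map_smul, ← hAb, hyeig]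
      simp
    -- the element s = E x has (A - (n+2)) s ∈ P
    have h8 : A (E x) - ((n : k) + 2) • E x = E (A x - (n : k) • x) := by
      rw [hAE x, map_sub, map_smul]
      module
    have hP1 : A (E x) - ((n : k) + 2) • E x ∈ P := by
      rw [h8]
      exact Submodule.mem_map_of_mem hAx
    -- Bezout
    have hcop : IsCoprime (X - C ((n : k) + 2)) g := by
      rw [hgdef]
      apply IsCoprime.prod_right
      intro m _
      have : (X + C (m : k)) = X - C (-(m : k)) := by
        rw [map_neg, sub_neg_eq_add]
      rw [this]
      apply Polynomial.isCoprime_X_sub_C_of_isUnit_sub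
      rw [isUnit_iff_ne_zero, sub_neg_eq_add]
      have h2 : ((n : k) + 2) + (m : k) = ((n + 2 + m : ℕ) : k) := by push_cast; ring
      rw [h2]
      have h3 : (n + 2 + m : ℕ) ≠ 0 := by omega
      exact Nat.cast_ne_zero.mpr h3
    obtain ⟨a, b, hab⟩ := hcop
    have hsum : E x = aeval A a (aeval A (X - C ((n : k) + 2)) (E x))
        + aeval A b (aeval A g (E x)) := by
      have h1 : aeval A (a * (X - C ((n : k) + 2)) + b * g) (E x) = E x := by
        rw [hab]
        simp
      calc E x = aeval A (a * (X - C ((n : k) + 2)) + b * g) (E x) := h1.symm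
        _ = _ := by
          rw [map_add, LinearMap.add_apply, map_mul, map_mul, Module.End.mul_apply,
            Module.End.mul_apply]
    have hterm1 : aeval A (X - C ((n : k) + 2)) (E x) = A (E x) - ((n : k) + 2) • E x := by
      rw [map_sub, LinearMap.sub_apply, aeval_X, aeval_C, Module.algebraMap_end_apply]
    have hsP : E x ∈ P := by
      rw [hsum]
      apply Submodule.add_mem
      · exact aeval_mem A P hAP a (by rw [hterm1]; exact hP1)
      · exact aeval_mem A P hAP b (hgP _ hEx)
    obtain ⟨m', hm', hEm'⟩ := hsP
    have : x - m' ∈ M := hUM (LinearMap.mem_ker.mpr (by rw [map_sub, hEm', sub_self]))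
    have hxM : x ∈ M := by
      have := Submodule.add_mem M this hm'
      simpa using this
    exact hyne ((hmemM x).mpr hxM)
  rw [← top_le_iff, ← hMtop]
  refine iSup_le fun n => iSup_le fun hn => iSup_le fun j => ?_
  intro y hy
  obtain ⟨u, hu, rfl⟩ := hy
  apply Submodule.mem_iSup_of_mem ((n : ℤ) - 2 * j)
  rw [Module.End.mem_eigenspace_iff, heigFj hu j]
  congr 1
  push_cast
  ring

end Key

/-- For an `sl2`-triple `(e, H, f)` in a finite-dimensional Lie algebra over a field of
characteristic zero, `ad H` is diagonalizable with integer eigenvalues: `g` is the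
(internal direct) sum of the eigenspaces `g(i) = {x | ⁅H, x⁆ = i • x}`, `i ∈ ℤ`. -/
theorem stmt2 {k g : Type*} [Field k] [CharZero k] [LieRing g] [LieAlgebra k g]
    [FiniteDimensional k g]
    (e H f : g)
    (he : ⁅H, e⁆ = (2 : k) • e)
    (hf : ⁅H, f⁆ = (-2 : k) • f)
    (hef : ⁅e, f⁆ = H) :
    (⨆ i : ℤ, Module.End.eigenspace (LieAlgebra.ad k g H) (i : k)) = ⊤ := by
  apply triple_iSup_eigenspace_eq_top (LieAlgebra.ad k g e) (LieAlgebra.ad k g H)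
    (LieAlgebra.ad k g f)
  · intro x
    simp only [LieAlgebra.ad_apply]
    rw [leibniz_lie H e x, he, smul_lie]
    abel
  · intro x
    simp only [LieAlgebra.ad_apply]
    rw [leibniz_lie H f x, hf, smul_lie]
    rw [neg_smul]
    abel
  · intro x
    simp only [LieAlgebra.ad_apply]
    rw [leibniz_lie e f x, hef]
    abel
end

section
/- Let g be a finite-dimensional Lie algebra over a field k of characteristic zero and (e,h,f) an sl2-triple in g. Write g(i) = {x ∈ g : [h,x] = i·x}. Then the map ad e : g(i) → g(i+2) is injective for all i ≤ -1 and surjective for all i ≥ -1. -/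
section aux

variable {k g : Type*} [Field k] [CharZero k] [LieRing g] [LieAlgebra k g]
    [FiniteDimensional k g]

/-- No infinite family of nonzero eigenvectors with distinct integer eigenvalues. -/
private lemma stmt3_no_chain (H : g) (y : ℕ → g) (c : ℕ → ℤ) (hc : Function.Injective c)
    (hy0 : ∀ j, y j ≠ 0) (hyH : ∀ j, ⁅H, y j⁆ = ((c j : ℤ) : k) • y j) : False := by
  have hinj : Function.Injective (fun j => ((c j : ℤ) : k)) := fun a b hab =>
    hc (Int.cast_injective hab)
  have hli : LinearIndependent k y :=
    (LieAlgebra.ad k g H).eigenvectors_linearIndependent' _ hinj y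
      (fun j => ⟨by rw [Module.End.mem_eigenspace_iff, LieAlgebra.ad_apply, hyH], hy0 j⟩)
  exact Module.Finite.not_linearIndependent_of_infinite y hli

/-- Key chain lemma: if `y` is a nonzero eigenvector of `ad H` with eigenvalue `m ≥ 1`
and `⁅e, ⁅f, y⁆⁆ = 0`, we get an infinite chain, contradiction. -/
private lemma stmt3_key (e H f : g)
    (he : ⁅H, e⁆ = (2 : k) • e)
    (hf : ⁅H, f⁆ = (-2 : k) • f)
    (hef : ⁅e, f⁆ = H)
    (m : ℤ) (hm : 1 ≤ m) (y : g)
    (hyH : ⁅H, y⁆ = ((m : ℤ) : k) • y) (hy0 : y ≠ 0)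
    (h0 : ⁅e, ⁅f, y⁆⁆ = 0) : False := by
  set Y : ℕ → g := fun j => ((LieAlgebra.ad k g e) ^ j) y with hY
  have hYsucc : ∀ j, Y (j + 1) = ⁅e, Y j⁆ := by
    intro j
    simp [hY, pow_succ', Module.End.mul_apply, LieAlgebra.ad_apply]
  -- eigenvalue of Y j is m + 2 j
  have hYH : ∀ j, ⁅H, Y j⁆ = ((m + 2 * j : ℤ) : k) • Y j := by
    intro j
    induction j with
    | zero => simpa [hY] using hyH
    | succ j ih =>
      rw [hYsucc j, leibniz_lie, he, ih, smul_lie, lie_smul, ← hYsucc j, ← add_smul]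
      congr 1
      push_cast
      ring
  -- the main invariant
  have hmain : ∀ j, Y j ≠ 0 ∧ ∃ b : ℤ, b ≤ 0 ∧ ⁅e, ⁅f, Y j⁆⁆ = ((b : ℤ) : k) • Y j := by
    intro j
    induction j with
    | zero => exact ⟨hy0, 0, le_refl 0, by simpa [hY] using h0⟩
    | succ j ih =>
      obtain ⟨hYj, b, hb, hbe⟩ := ih
      have hfY : ⁅f, Y (j + 1)⁆ = ((b - (m + 2 * j) : ℤ) : k) • Y j := by
        have hjac : ⁅e, ⁅f, Y j⁆⁆ = ⁅H, Y j⁆ + ⁅f, ⁅e, Y j⁆⁆ := by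
          rw [← hef]; rw [leibniz_lie e f (Y j)]
        rw [hYsucc j]
        have : ⁅f, ⁅e, Y j⁆⁆ = ⁅e, ⁅f, Y j⁆⁆ - ⁅H, Y j⁆ := by
          rw [hjac]; abel
        rw [this, hbe, hYH j, ← sub_smul]
        congr 1
        push_cast
        ring
      have hb' : (b - (m + 2 * j) : ℤ) < 0 := by omega
      have hYj1 : Y (j + 1) ≠ 0 := by
        intro hcon
        rw [hcon, lie_zero] at hfY
        have := (smul_eq_zero.mp hfY.symm).resolve_right hYj
        rw [Int.cast_eq_zero] at this
        omega
      refine ⟨hYj1, b - (m + 2 * j), by omega, ?_⟩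
      rw [hfY, lie_smul, hYsucc j]
  -- infinite chain of eigenvectors with distinct eigenvalues: contradiction
  exact stmt3_no_chain H Y (fun j => m + 2 * j)
    (fun a b hab => by dsimp only at hab; omega) (fun j => (hmain j).1) hYH

end aux

/-- For an `sl2`-triple `(e, H, f)`, the map `ad e : g(i) → g(i+2)` between `ad H`-eigenspaces
is injective for `i ≤ -1` and surjective for `i ≥ -1`. -/
theorem stmt3 {k g : Type*} [Field k] [CharZero k] [LieRing g] [LieAlgebra k g]
    [FiniteDimensional k g]
    (e H f : g)
    (he : ⁅H, e⁆ = (2 : k) • e)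
    (hf : ⁅H, f⁆ = (-2 : k) • f)
    (hef : ⁅e, f⁆ = H)
    (i : ℤ) :
    (i ≤ -1 → ∀ x ∈ Module.End.eigenspace (LieAlgebra.ad k g H) (i : k),
        ⁅e, x⁆ = 0 → x = 0) ∧
    (-1 ≤ i → ∀ y ∈ Module.End.eigenspace (LieAlgebra.ad k g H) ((i + 2 : ℤ) : k),
        ∃ x ∈ Module.End.eigenspace (LieAlgebra.ad k g H) (i : k), ⁅e, x⁆ = y) := by
  have hmem : ∀ (c : k) (x : g),
      x ∈ Module.End.eigenspace (LieAlgebra.ad k g H) c ↔ ⁅H, x⁆ = c • x := by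
    intro c x
    rw [Module.End.mem_eigenspace_iff, LieAlgebra.ad_apply]
  constructor
  · -- injectivity for i ≤ -1
    intro hi x hx hex
    by_contra hx0
    have hx' : ⁅H, x⁆ = ((i : ℤ) : k) • x := (hmem _ x).mp hx
    -- apply the key lemma to the triple (f, -H, e) with eigenvalue -i ≥ 1
    refine stmt3_key (k := k) f (-H) e ?_ ?_ ?_ (-i) (by omega) x ?_ hx0 (by rw [hex, lie_zero])
    · rw [neg_lie, hf, neg_smul, neg_neg]
    · rw [neg_lie, he, ← neg_smul]
    · rw [← lie_skew, hef]
    · rw [neg_lie, hx']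
      push_cast
      module
  · -- surjectivity for i ≥ -1
    intro hi y hy
    set c : k := ((i + 2 : ℤ) : k) with hc
    set V := Module.End.eigenspace (LieAlgebra.ad k g H) c with hV
    -- the operator z ↦ ⁅e, ⁅f, z⁆⁆ on V
    have hmapsto : ∀ z : g, z ∈ V → ⁅e, ⁅f, z⁆⁆ ∈ V := by
      intro z hz
      rw [hmem] at hz ⊢
      have h1 : ⁅H, ⁅f, z⁆⁆ = (c - 2) • ⁅f, z⁆ := by
        rw [leibniz_lie, hf, hz, smul_lie, lie_smul]
        module
      rw [leibniz_lie, he, h1, smul_lie, lie_smul]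
      module
    let T : V →ₗ[k] V :=
      { toFun := fun z => ⟨⁅e, ⁅f, (z : g)⁆⁆, hmapsto _ z.2⟩
        map_add' := fun a b => by
          ext
          simp
        map_smul' := fun r a => by
          ext
          simp }
    have hTinj : Function.Injective T := by
      rw [← LinearMap.ker_eq_bot, LinearMap.ker_eq_bot']
      intro z hz
      by_contra hz0
      have hz0' : (z : g) ≠ 0 := fun h => hz0 (Subtype.ext h)
      have hzH : ⁅H, (z : g)⁆ = ((i + 2 : ℤ) : k) • (z : g) := (hmem _ _).mp z.2
      have hEF : ⁅e, ⁅f, (z : g)⁆⁆ = 0 := by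
        have := congrArg (Subtype.val) hz
        simpa [T] using this
      exact stmt3_key e H f he hf hef (i + 2) (by omega) (z : g) hzH hz0' hEF
    have hTsurj : Function.Surjective T := LinearMap.injective_iff_surjective.mp hTinj
    obtain ⟨z, hz⟩ := hTsurj ⟨y, hy⟩
    refine ⟨⁅f, (z : g)⁆, ?_, ?_⟩
    · rw [hmem]
      have hzH : ⁅H, (z : g)⁆ = c • (z : g) := (hmem _ _).mp z.2
      have hci : c = (i : k) + 2 := by rw [hc]; push_cast; ring
      rw [leibniz_lie, hf, hzH, smul_lie, lie_smul, hci]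
      module
    · have := congrArg (Subtype.val) hz
      simpa [T] using this
end

section
/- Let g be a finite-dimensional Lie algebra over a field k of characteristic zero and (e,h,f) an sl2-triple in g, with g(i) = {x ∈ g : [h,x] = i·x}. Then the centralizer of e in g satisfies dim ker(ad e) = dim g(0) + dim g(1). -/
open Polynomial Module Finset

set_option linter.unusedSectionVars false

namespace Sl2Work

variable {k V : Type*} [Field k] [CharZero k] [AddCommGroup V] [Module k V]
  [FiniteDimensional k V]

/-- An abstract `sl2` triple of endomorphisms. -/
structure Rel (E Hm F : Module.End k V) : Prop where
  hHE : Hm * E = E * Hm + (2 : k) • E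
  hHF : Hm * F = F * Hm - (2 : k) • F
  hEF : E * F = F * E + Hm

/-- An endomorphism scaled by a nonzero constant under commutator with `Hm` is nilpotent. -/
lemma isNilpotent_of_comm {Hm A : Module.End k V} (c : k) (hc : c ≠ 0)
    (h : Hm * A = A * Hm + c • A) : IsNilpotent A := by
  have key : ∀ n : ℕ, Hm * A ^ n = A ^ n * Hm + ((n : k) * c) • A ^ n := by
    intro n
    induction n with
    | zero => simp
    | succ n ih =>
      rw [pow_succ, ← mul_assoc, ih, add_mul, smul_mul_assoc, mul_assoc, h, mul_add,
        ← mul_assoc, mul_smul_comm]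
      rw [add_assoc, ← add_smul]
      congr 2
      push_cast
      ring
  by_contra hA
  have hA' : ∀ n : ℕ, A ^ n ≠ 0 := fun n hn => hA ⟨n, hn⟩
  set D : Module.End k (Module.End k V) :=
    LinearMap.mulLeft k Hm - LinearMap.mulRight k Hm with hD
  have hev : ∀ n : ℕ, D.HasEigenvector ((n : k) * c) (A ^ n) := by
    intro n
    refine ⟨Module.End.mem_eigenspace_iff.mpr ?_, hA' n⟩
    simp only [hD, LinearMap.sub_apply, LinearMap.mulLeft_apply, LinearMap.mulRight_apply]
    rw [key n]
    abel
  have hinj : Function.Injective (fun n : ℕ => (n : k) * c) := by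
    intro a b hab
    exact_mod_cast mul_right_cancel₀ hc hab
  have := Module.End.eigenvectors_linearIndependent' D (fun n : ℕ => (n : k) * c) hinj _ hev
  exact Module.Finite.not_linearIndependent_of_infinite (v := fun n : ℕ => A ^ n) this

namespace Rel

variable {E Hm F : Module.End k V} (h : Rel E Hm F)
include h

lemma nilpE : IsNilpotent E := isNilpotent_of_comm 2 two_ne_zero h.hHE

lemma nilpF : IsNilpotent F := by
  refine isNilpotent_of_comm (Hm := Hm) (-2) (by norm_num) ?_
  rw [h.hHF]; module

/-- The fundamental commutation identity `[E, F^(n+1)] = (n+1) F^n (Hm - n)`. -/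
lemma comm_pow : ∀ n : ℕ,
    E * F ^ (n + 1) = F ^ (n + 1) * E + ((n : k) + 1) • (F ^ n * (Hm - (n : k) • 1)) := by
  intro n
  induction n with
  | zero => simpa using h.hEF
  | succ n ih =>
    have hHmF : (Hm - (n : k) • 1) * F = F * (Hm - ((n : k) + 2) • 1) := by
      rw [sub_mul, mul_sub, h.hHF, smul_mul_assoc, one_mul, mul_smul_comm, mul_one]
      module
    have step : E * F ^ (n + 2) = (E * F ^ (n + 1)) * F := by rw [mul_assoc, ← pow_succ]
    rw [step, ih, add_mul, smul_mul_assoc]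
    simp only [mul_assoc]
    rw [h.hEF, hHmF]
    simp only [pow_succ, mul_sub, mul_add, mul_smul_comm, smul_mul_assoc, mul_one, smul_sub,
      smul_add, smul_smul, mul_assoc]
    module

lemma E_mul_pow_Hm : ∀ n : ℕ, E * Hm ^ n = (Hm - (2 : k) • 1) ^ n * E := by
  intro n
  induction n with
  | zero => simp
  | succ n ih =>
    have base : E * Hm = (Hm - (2 : k) • 1) * E := by
      rw [sub_mul, smul_mul_assoc, one_mul, eq_sub_iff_add_eq, ← h.hHE]
    rw [pow_succ, ← mul_assoc, ih, mul_assoc, base, ← mul_assoc, ← pow_succ]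

lemma E_mul_aeval (p : k[X]) : E * aeval Hm p = aeval (Hm - (2 : k) • 1) p * E := by
  induction p using Polynomial.induction_on' with
  | add p q hp hq => rw [map_add, map_add, mul_add, add_mul, hp, hq]
  | monomial n a =>
    rw [aeval_monomial, aeval_monomial, ← Algebra.smul_def, ← Algebra.smul_def,
      mul_smul_comm, smul_mul_assoc, h.E_mul_pow_Hm]

lemma ker_aeval {v : V} (hv : E v = 0) (p : k[X]) : E (aeval Hm p v) = 0 := by
  rw [← Module.End.mul_apply, h.E_mul_aeval, Module.End.mul_apply, hv, map_zero]

lemma ker_Hm {v : V} (hv : E v = 0) : E (Hm v) = 0 := by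
  simpa using h.ker_aeval hv X

/-- If `E v = 0` and `F ^ n v = 0` then `v` is killed by `∏_{j<n} (Hm - j)`. -/
lemma vanish : ∀ (n : ℕ) (v : V), E v = 0 → (F ^ n) v = 0 →
    (aeval Hm (∏ j ∈ Finset.range n, (X - C (j : k)))) v = 0 := by
  intro n
  induction n with
  | zero =>
    intro v hv h0
    simp only [pow_zero, Module.End.one_apply] at h0
    rw [h0, map_zero]
  | succ n ih =>
    intro v hv h0
    have key := congrArg (fun (T : Module.End k V) => T v) (h.comm_pow n)
    simp only [LinearMap.add_apply, LinearMap.smul_apply, Module.End.mul_apply] at key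
    rw [h0, map_zero, hv, map_zero, zero_add] at key
    have hne : ((n : k) + 1) ≠ 0 := by
      have h1 : ((n : k) + 1) = ((n + 1 : ℕ) : k) := by push_cast; ring
      rw [h1]
      exact Nat.cast_ne_zero.mpr (Nat.succ_ne_zero n)
    have hFn : (F ^ n) ((Hm - (n : k) • 1) v) = 0 := by
      have := smul_eq_zero.mp key.symm
      rcases this with h1 | h1
      · exact absurd h1 hne
      · exact h1
    have hw : E ((Hm - (n : k) • 1) v) = 0 := by
      rw [LinearMap.sub_apply, map_sub, LinearMap.smul_apply, Module.End.one_apply,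
        h.ker_Hm hv, map_smul, hv, smul_zero, sub_zero]
    have := ih ((Hm - (n : k) • 1) v) hw hFn
    rw [Finset.prod_range_succ, map_mul]
    have hXC : (aeval Hm (X - C (n : k))) v = (Hm - (n : k) • 1) v := by
      simp [Algebra.algebraMap_eq_smul_one, Nat.cast_smul_eq_nsmul]
    rw [Module.End.mul_apply, hXC]
    exact this

section Strings

variable {x : V} {j : ℕ} (hx1 : E x = 0) (hx2 : Hm x = ((j : ℕ) : k) • x)
include hx1 hx2

lemma string_H : ∀ i : ℕ, Hm ((F ^ i) x) = ((j : k) - 2 * i) • (F ^ i) x := by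
  intro i
  induction i with
  | zero => simpa using hx2
  | succ i ih =>
    have : (F ^ (i + 1)) x = F ((F ^ i) x) := by rw [pow_succ', Module.End.mul_apply]
    rw [this]
    have key := congrArg (fun (T : Module.End k V) => T ((F ^ i) x)) h.hHF
    simp only [LinearMap.sub_apply, LinearMap.smul_apply, Module.End.mul_apply] at key
    rw [key, ih, map_smul]
    push_cast
    module

lemma string_E : ∀ i : ℕ,
    E ((F ^ (i + 1)) x) = (((i : k) + 1) * ((j : k) - i)) • (F ^ i) x := by
  intro i
  have key := congrArg (fun (T : Module.End k V) => T x) (h.comm_pow i)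
  simp only [LinearMap.add_apply, LinearMap.smul_apply, Module.End.mul_apply] at key
  rw [hx1, map_zero, zero_add] at key
  rw [key, LinearMap.sub_apply, LinearMap.smul_apply, Module.End.one_apply, hx2,
    map_sub, map_smul, map_smul]
  rw [smul_sub, smul_smul, smul_smul, mul_sub, sub_smul]

/-- The scalar `∏_{i<r} (i+1)(j-i)`. -/
noncomputable def cval (j r : ℕ) : k := ∏ i ∈ Finset.range r, (((i : k) + 1) * ((j : k) - i))

lemma string_EF : ∀ r : ℕ, (E ^ r) ((F ^ r) x) = (cval j r : k) • x := by
  intro r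
  induction r with
  | zero => simp [cval]
  | succ r ih =>
    have h1 : (E ^ (r + 1)) ((F ^ (r + 1)) x) = (E ^ r) (E ((F ^ (r + 1)) x)) := by
      rw [pow_succ, Module.End.mul_apply]
    rw [h1, h.string_E hx1 hx2 r, map_smul, ih, smul_smul]
    rw [show cval j (r+1) = ((cval j r : k) * (((r:k)+1) * ((j:k) - r))) from by
      rw [cval, cval, Finset.prod_range_succ]]
    rw [mul_comm]

lemma string_E_zero : ∀ r t : ℕ, (E ^ (t + 1 + r)) ((F ^ r) x) = 0 := by
  intro r t
  rw [pow_add, Module.End.mul_apply, h.string_EF hx1 hx2 r, map_smul]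
  have h2 : (E ^ (t + 1)) x = (E ^ t) (E x) := by rw [pow_succ, Module.End.mul_apply]
  rw [h2, hx1, map_zero, smul_zero]

end Strings

lemma cval_ne_zero {j r : ℕ} (hrj : r ≤ j) : (cval j r : k) ≠ 0 := by
  rw [cval]
  apply Finset.prod_ne_zero_iff.mpr
  intro i hi
  rw [Finset.mem_range] at hi
  apply mul_ne_zero
  · have : ((i : k) + 1) = ((i + 1 : ℕ) : k) := by push_cast; ring
    rw [this]
    exact Nat.cast_ne_zero.mpr (Nat.succ_ne_zero i)
  · rw [sub_ne_zero]
    intro hc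
    have := Nat.cast_injective hc
    omega

lemma E_eig {μ : k} {x : V} (hx : Hm x = μ • x) : Hm (E x) = (μ + 2) • E x := by
  have key := congrArg (fun (T : Module.End k V) => T x) h.hHE
  simp only [LinearMap.add_apply, LinearMap.smul_apply, Module.End.mul_apply] at key
  rw [key, hx, map_smul]
  module

lemma E_pow_eig {μ : k} {x : V} (hx : Hm x = μ • x) :
    ∀ n : ℕ, Hm ((E ^ n) x) = (μ + 2 * n) • (E ^ n) x := by
  intro n
  induction n with
  | zero => simpa using hx
  | succ n ih =>
    have : (E ^ (n + 1)) x = E ((E ^ n) x) := by rw [pow_succ', Module.End.mul_apply]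
    rw [this, h.E_eig ih]
    push_cast
    module

end Rel

/-- Only finitely many natural numbers are eigenvalues. -/
lemma exists_bound (Hm : Module.End k V) :
    ∃ M : ℕ, ∀ j : ℕ, M ≤ j → Module.End.eigenspace Hm (j : k) = ⊥ := by
  by_contra hc
  push_neg at hc
  have key : ∀ M : ℕ, ∃ j : ℕ, M ≤ j ∧ Module.End.eigenspace Hm (j : k) ≠ ⊥ := by
    intro M
    obtain ⟨j, hj1, hj2⟩ := hc M
    exact ⟨j, hj1, hj2⟩
  -- Build a strictly increasing sequence of natural eigenvalues
  have : ∀ n : ℕ, ∃ j : ℕ, n ≤ j ∧ Module.End.eigenspace Hm (j : k) ≠ ⊥ := key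
  choose idx hidx1 hidx2 using this
  set S : Set ℕ := {j : ℕ | Module.End.eigenspace Hm (j : k) ≠ ⊥} with hS
  have hSinf : S.Infinite := by
    intro hfin
    obtain ⟨M, hM⟩ := hfin.bddAbove
    have := hidx2 (M + 1)
    have hmem : idx (M + 1) ∈ S := this
    have := hM hmem
    have := hidx1 (M + 1)
    omega
  haveI : Infinite ↥S := hSinf.to_subtype
  have hvec : ∀ j : ↥S, ∃ x : V, Hm.HasEigenvector ((j : ℕ) : k) x := by
    intro ⟨j, hj⟩
    obtain ⟨x, hx1, hx2⟩ := Submodule.exists_mem_ne_zero_of_ne_bot hj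
    exact ⟨x, hx1, hx2⟩
  choose xs hxs using hvec
  have hinj : Function.Injective (fun j : ↥S => ((j : ℕ) : k)) := by
    intro a b hab
    exact Subtype.ext (Nat.cast_injective hab)
  have := Module.End.eigenvectors_linearIndependent' Hm _ hinj _ hxs
  exact Module.Finite.not_linearIndependent_of_infinite (v := xs) this

section LagrangeStuff

/-- The product `∏_{i<L} (X - i)`. -/
noncomputable def Ppoly (L : ℕ) : k[X] := ∏ i ∈ Finset.range L, (X - C (i : k))

lemma basis_key_mem {L j : ℕ} (hj : j ∈ Finset.range L) :
    (X - C ((j : ℕ) : k)) * Lagrange.basis (Finset.range L) (fun n : ℕ => (n : k)) j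
      = C (∏ i ∈ (Finset.range L).erase j, ((j : k) - (i : k))⁻¹) * Ppoly (k := k) L := by
  rw [Lagrange.basis]
  simp only [Lagrange.basisDivisor]
  rw [Finset.prod_mul_distrib, ← map_prod, Ppoly,
    ← Finset.mul_prod_erase _ (fun i : ℕ => X - C ((i : ℕ) : k)) hj]
  ring

lemma basis_key_not_mem {L j : ℕ} (hj : j ∉ Finset.range L) :
    Lagrange.basis (Finset.range L) (fun n : ℕ => (n : k)) j
      = C (∏ i ∈ Finset.range L, ((j : k) - (i : k))⁻¹) * Ppoly (k := k) L := by
  rw [Lagrange.basis]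
  simp only [Lagrange.basisDivisor]
  rw [Finset.erase_eq_of_notMem hj, Finset.prod_mul_distrib, ← map_prod, Ppoly]

lemma aeval_eigen {Hm : Module.End k V} {μ : k} {x : V} (hx : Hm x = μ • x) (p : k[X]) :
    aeval Hm p x = p.eval μ • x := by
  induction p using Polynomial.induction_on' with
  | add p q hp hq => rw [map_add, LinearMap.add_apply, hp, hq, eval_add, add_smul]
  | monomial n a =>
    have hpow : ∀ m : ℕ, (Hm ^ m) x = μ ^ m • x := by
      intro m
      induction m with
      | zero => simp
      | succ m ih =>
        rw [pow_succ, Module.End.mul_apply, hx, map_smul, ih, smul_smul, ← pow_succ']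
    rw [aeval_monomial, ← Algebra.smul_def, LinearMap.smul_apply, hpow, eval_monomial,
      smul_smul]

/-- The Lagrange interpolation projector. -/
noncomputable def piL (Hm : Module.End k V) (L j : ℕ) : Module.End k V :=
  aeval Hm (Lagrange.basis (Finset.range L) (fun n : ℕ => (n : k)) j)

variable {Hm : Module.End k V}

lemma piL_eigenvec {L j : ℕ} {μ : k} {x : V} (hx : Hm x = μ • x) :
    piL Hm L j x = (Lagrange.basis (Finset.range L) (fun n : ℕ => (n : k)) j).eval μ • x := by
  simp only [piL]
  exact aeval_eigen hx _

/-- If `v` is killed by `Ppoly L`, then the Lagrange projector sends `v` into the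
`j`-eigenspace. -/
lemma pi_eigen {L j : ℕ} (hj : j ∈ Finset.range L) {v : V}
    (hPv : aeval Hm (Ppoly (k := k) L) v = 0) :
    Hm (piL Hm L j v) = ((j : ℕ) : k) • piL Hm L j v := by
  simp only [piL]
  have key := congrArg (fun p : k[X] => aeval Hm p v) (basis_key_mem (k := k) hj)
  simp only [map_mul, Module.End.mul_apply, map_sub, aeval_C, aeval_X, LinearMap.sub_apply,
    Module.algebraMap_end_apply, hPv, map_zero, smul_zero] at key
  rw [sub_eq_zero] at key
  rw [key]

lemma pi_zero {L j : ℕ} (hj : j ∉ Finset.range L) {v : V}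
    (hPv : aeval Hm (Ppoly (k := k) L) v = 0) :
    piL Hm L j v = 0 := by
  simp only [piL]
  have key := congrArg (fun p : k[X] => aeval Hm p v) (basis_key_not_mem (k := k) hj)
  simp only [map_mul, Module.End.mul_apply] at key
  rw [key, hPv, map_zero]

lemma sum_pi {L : ℕ} (hL : 0 < L) (v : V) :
    ∑ j ∈ Finset.range L, piL Hm L j v = v := by
  simp only [piL]
  have hinj : Set.InjOn (fun n : ℕ => (n : k)) (Finset.range L) :=
    fun a _ b _ hab => Nat.cast_injective hab
  have hsum := Lagrange.sum_basis hinj (Finset.nonempty_range_iff.mpr hL.ne')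
  have := congrArg (fun p : k[X] => aeval Hm p v) hsum
  simp only [map_sum, LinearMap.sum_apply, map_one, Module.End.one_apply] at this
  simpa using this

end LagrangeStuff

namespace Rel

variable {E Hm F : Module.End k V} (h : Rel E Hm F)
include h

/-- If a sum of strings vanishes, each primitive vector vanishes. -/
lemma kill (ε : ℕ) : ∀ (m : ℕ) (x : ℕ → V),
    (∀ r, E (x r) = 0 ∧ Hm (x r) = ((2 * r + ε : ℕ) : k) • x r) →
    ∑ r ∈ Finset.range m, (F ^ r) (x r) = 0 → ∀ r < m, x r = 0 := by
  intro m
  induction m with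
  | zero => intro x hx hsum r hr; exact absurd hr (Nat.not_lt_zero r)
  | succ m ih =>
    intro x hx hsum
    have happ : ∑ r ∈ Finset.range (m + 1), (E ^ m) ((F ^ r) (x r)) = 0 := by
      rw [← map_sum, hsum, map_zero]
    rw [Finset.sum_range_succ] at happ
    have hzero : ∀ r ∈ Finset.range m, (E ^ m) ((F ^ r) (x r)) = 0 := by
      intro r hr
      rw [Finset.mem_range] at hr
      have hm : m = (m - r - 1) + 1 + r := by omega
      rw [hm]
      exact h.string_E_zero (hx r).1 (hx r).2 r (m - r - 1)
    rw [Finset.sum_eq_zero hzero, zero_add, h.string_EF (hx m).1 (hx m).2 m] at happ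
    have hc : (cval (2 * m + ε) m : k) ≠ 0 := h.cval_ne_zero (j := 2 * m + ε) (r := m) (by omega)
    have hxm : x m = 0 := by
      rcases smul_eq_zero.mp happ with h1 | h1
      · exact absurd h1 hc
      · exact h1
    have hsum' : ∑ r ∈ Finset.range m, (F ^ r) (x r) = 0 := by
      rw [Finset.sum_range_succ, hxm, map_zero, add_zero] at hsum
      exact hsum
    intro r hr
    rcases Nat.lt_succ_iff_lt_or_eq.mp hr with h1 | h1
    · exact ih x hx hsum' r h1
    · rw [h1]; exact hxm

/-- Every eigenvector of weight `ε` is a sum of pieces of strings with natural weights. -/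
lemma build (ε M L : ℕ) (hM : ∀ j : ℕ, M ≤ j → Module.End.eigenspace Hm ((j : ℕ) : k) = ⊥)
    (hML : M ≤ L) :
    ∀ (n : ℕ) (y : V), Hm y = ((ε : ℕ) : k) • y → (E ^ n) y = 0 →
      ∃ x : ℕ → V, (∀ r, E (x r) = 0 ∧ Hm (x r) = ((2 * r + ε : ℕ) : k) • x r) ∧
        y = ∑ r ∈ Finset.range L, (F ^ r) (x r) := by
  intro n
  induction n with
  | zero =>
    intro y hy h0
    simp only [pow_zero, Module.End.one_apply] at h0
    exact ⟨0, fun r => by simp, by simp [h0]⟩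
  | succ n ih =>
    intro y hy h0
    by_cases hz0 : (E ^ n) y = 0
    · exact ih y hy hz0
    set z := (E ^ n) y with hz
    have hzeig : Hm z = ((2 * n + ε : ℕ) : k) • z := by
      have hh := h.E_pow_eig hy n
      rw [← hz] at hh
      rw [hh]
      congr 1
      push_cast
      ring
    have hnM : 2 * n + ε < M := by
      by_contra hge
      push_neg at hge
      have hbot := hM (2 * n + ε) hge
      have hmem : z ∈ Module.End.eigenspace Hm ((2 * n + ε : ℕ) : k) :=
        Module.End.mem_eigenspace_iff.mpr hzeig
      rw [hbot] at hmem
      exact hz0 ((Submodule.mem_bot k).mp hmem)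
    have hEz : E z = 0 := by
      have hh : (E ^ (n + 1)) y = E ((E ^ n) y) := by rw [pow_succ', Module.End.mul_apply]
      rw [hh] at h0
      exact h0
    have hc : (cval (2 * n + ε) n : k) ≠ 0 := h.cval_ne_zero (j := 2 * n + ε) (r := n) (by omega)
    set c : k := cval (2 * n + ε) n with hcdef
    set y' := y - c⁻¹ • (F ^ n) z with hy'
    have hy'eig : Hm y' = ((ε : ℕ) : k) • y' := by
      rw [hy', map_sub, map_smul, h.string_H hEz hzeig n, hy]
      have hcast : ((2 * n + ε : ℕ) : k) - 2 * (n : k) = ((ε : ℕ) : k) := by push_cast; ring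
      rw [hcast, smul_sub, smul_smul, smul_smul, mul_comm]
    have h0' : (E ^ n) y' = 0 := by
      rw [hy', map_sub, map_smul, h.string_EF hEz hzeig n, ← hcdef, ← hz, smul_smul,
        inv_mul_cancel₀ hc, one_smul, sub_self]
    obtain ⟨x', hx'mem, hx'sum⟩ := ih y' hy'eig h0'
    refine ⟨fun r => x' r + if r = n then c⁻¹ • z else 0, fun r => ?_, ?_⟩
    · rcases eq_or_ne r n with hr | hr
      · subst hr
        constructor
        · simp [map_add, map_smul, hEz, (hx'mem r).1]
        · simp [map_add, map_smul, (hx'mem r).2, hzeig, smul_add, smul_smul, mul_comm]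
      · constructor
        · simp [hr, (hx'mem r).1]
        · simp [hr, (hx'mem r).2]
    · have hterm : ∀ r, (F ^ r) (x' r + if r = n then c⁻¹ • z else 0)
          = (F ^ r) (x' r) + (if r = n then c⁻¹ • (F ^ n) z else 0) := by
        intro r
        rcases eq_or_ne r n with hr | hr
        · subst hr; simp [map_add, map_smul]
        · simp [hr]
      simp only [hterm]
      rw [Finset.sum_add_distrib, Finset.sum_ite_eq' (Finset.range L) n
        (fun _ => c⁻¹ • (F ^ n) z)]
      have hnL : n ∈ Finset.range L := Finset.mem_range.mpr (by omega)
      rw [if_pos hnL, ← hx'sum, hy']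
      abel

end Rel

/-- Abstract counting principle: if `f0, f1` map `K` into `W0, W1`, jointly injectively on `K`,
and jointly surjectively onto `W0 × W1`, then `dim K = dim W0 + dim W1`. -/
lemma finrank_eq_of_maps (K W0 W1 : Submodule k V) (f0 f1 : V →ₗ[k] V)
    (hmem0 : ∀ v ∈ K, f0 v ∈ W0) (hmem1 : ∀ v ∈ K, f1 v ∈ W1)
    (hinj : ∀ v ∈ K, f0 v = 0 → f1 v = 0 → v = 0)
    (hsurj : ∀ y0 ∈ W0, ∀ y1 ∈ W1, ∃ v ∈ K, f0 v = y0 ∧ f1 v = y1) :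
    Module.finrank k ↥K = Module.finrank k ↥W0 + Module.finrank k ↥W1 := by
  let Φ : ↥K →ₗ[k] ↥W0 × ↥W1 :=
    LinearMap.prod
      ((f0.comp K.subtype).codRestrict W0 (fun v => hmem0 v.1 v.2))
      ((f1.comp K.subtype).codRestrict W1 (fun v => hmem1 v.1 v.2))
  have hbij : Function.Bijective Φ := by
    constructor
    · intro v w hvw
      have h0 : f0 ((v : V) - w) = 0 ∧ f1 ((v : V) - w) = 0 := by
        have h0' := congrArg (fun z : ↥W0 × ↥W1 => ((z.1 : V), (z.2 : V))) hvw
        simp only [Φ, LinearMap.prod_apply, Function.prod_apply, LinearMap.codRestrict_apply,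
          LinearMap.comp_apply, Submodule.coe_subtype, Prod.mk.injEq] at h0'
        constructor <;> rw [map_sub] <;> [rw [show f0 v = f0 w from h0'.1]; rw [show f1 v = f1 w from h0'.2]] <;> exact sub_self _
      have hmemK : (v : V) - w ∈ K := K.sub_mem v.2 w.2
      have := hinj _ hmemK h0.1 h0.2
      exact Subtype.ext (by rwa [sub_eq_zero] at this)
    · rintro ⟨⟨y0, hy0⟩, ⟨y1, hy1⟩⟩
      obtain ⟨v, hvK, hv0, hv1⟩ := hsurj y0 hy0 y1 hy1
      refine ⟨⟨v, hvK⟩, ?_⟩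
      apply Prod.ext <;> apply Subtype.ext <;>
        simp only [Φ, LinearMap.prod_apply, Pi.prod, LinearMap.codRestrict_apply,
          LinearMap.comp_apply, Submodule.coe_subtype]
      · exact hv0
      · exact hv1
  rw [(LinearEquiv.ofBijective Φ hbij).finrank_eq, Module.finrank_prod]

theorem Rel.main {E Hm F : Module.End k V} (h : Rel E Hm F) :
    Module.finrank k ↥(LinearMap.ker E) =
      Module.finrank k ↥(Module.End.eigenspace Hm (0 : k)) +
        Module.finrank k ↥(Module.End.eigenspace Hm (1 : k)) := by
  obtain ⟨N, hN⟩ := h.nilpF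
  obtain ⟨M, hM'⟩ := exists_bound Hm
  set L := N + M + 2 with hLdef
  have hML : M ≤ L := by omega
  have hL0 : 0 < L := by omega
  have hFL : F ^ L = 0 := by
    have : F ^ L = F ^ (L - N) * F ^ N := by rw [← pow_add]; congr 1; omega
    rw [this, hN, mul_zero]
  have hPker : ∀ v : V, E v = 0 → aeval Hm (Ppoly (k := k) L) v = 0 := by
    intro v hv
    apply h.vanish L v hv
    rw [hFL]
    rfl
  -- the projectors are compatible with the kernel of `E`
  have hπker : ∀ (v : V), E v = 0 → ∀ j : ℕ, E (piL Hm L j v) = 0 := by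
    intro v hv j
    exact h.ker_aeval hv _
  have hπeig : ∀ (v : V), E v = 0 → ∀ j : ℕ, Hm (piL Hm L j v) = ((j : ℕ) : k) • piL Hm L j v := by
    intro v hv j
    by_cases hj : j ∈ Finset.range L
    · exact pi_eigen hj (hPker v hv)
    · rw [pi_zero hj (hPker v hv), map_zero, smul_zero]
  -- the two component maps
  set A : ℕ → Module.End k V :=
    fun ε => ∑ r ∈ Finset.range L, (F ^ r) * piL Hm L (2 * r + ε) with hAdef
  have hAapply : ∀ (ε : ℕ) (v : V),
      A ε v = ∑ r ∈ Finset.range L, (F ^ r) (piL Hm L (2 * r + ε) v) := by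
    intro ε v
    rw [hAdef]
    simp [LinearMap.sum_apply, Module.End.mul_apply]
  have hinjOn : Set.InjOn (fun n : ℕ => (n : k)) (Finset.range L) :=
    fun a _ b _ hab => Nat.cast_injective hab
  -- membership of the components in the eigenspaces
  have hmem : ∀ (ε : ℕ) (v : V), E v = 0 →
      A ε v ∈ Module.End.eigenspace Hm ((ε : ℕ) : k) := by
    intro ε v hv
    rw [hAapply]
    apply Submodule.sum_mem
    intro r hr
    rw [Module.End.mem_eigenspace_iff, h.string_H (hπker v hv _) (hπeig v hv _) r]
    congr 1
    push_cast
    ring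
  -- injectivity
  have hinj : ∀ v : V, E v = 0 → A 0 v = 0 → A 1 v = 0 → v = 0 := by
    intro v hv h0 h1
    have k0 := h.kill 0 L (fun r => piL Hm L (2 * r + 0) v)
      (fun r => ⟨hπker v hv _, hπeig v hv _⟩) (by rw [← hAapply]; exact h0)
    have k1 := h.kill 1 L (fun r => piL Hm L (2 * r + 1) v)
      (fun r => ⟨hπker v hv _, hπeig v hv _⟩) (by rw [← hAapply]; exact h1)
    have hall : ∀ j ∈ Finset.range L, piL Hm L j v = 0 := by
      intro j hj
      rw [Finset.mem_range] at hj
      rcases Nat.mod_two_eq_zero_or_one j with hpar | hpar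
      · have hjj : j = 2 * (j / 2) + 0 := by omega
        rw [hjj]
        exact k0 (j / 2) (by omega)
      · have hjj : j = 2 * (j / 2) + 1 := by omega
        rw [hjj]
        exact k1 (j / 2) (by omega)
    rw [← sum_pi (Hm := Hm) hL0 v]
    exact Finset.sum_eq_zero hall
  -- evaluating projectors on eigenvectors with natural eigenvalues
  have hπeigvec : ∀ (j j' : ℕ) (x : V), Hm x = ((j' : ℕ) : k) • x →
      piL Hm L j x = if j = j' ∧ j' < L then x else 0 := by
    intro j j' x hx
    by_cases hj' : j' < L
    · rw [piL_eigenvec hx]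
      by_cases hjj : j = j'
      · subst hjj
        rw [Lagrange.eval_basis_self hinjOn (Finset.mem_range.mpr hj'), one_smul,
          if_pos ⟨rfl, hj'⟩]
      · rw [Lagrange.eval_basis_of_ne hjj (Finset.mem_range.mpr hj'), zero_smul,
          if_neg (by tauto)]
    · have hx0 : x = 0 := by
        have hmem2 : x ∈ Module.End.eigenspace Hm ((j' : ℕ) : k) :=
          Module.End.mem_eigenspace_iff.mpr hx
        rw [hM' j' (by omega)] at hmem2
        exact (Submodule.mem_bot k).mp hmem2
      simp [hx0]
  -- key computation for surjectivity
  have claim : ∀ (a b : ℕ) (xa xb : ℕ → V),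
      (∀ r, Hm (xa r) = ((2 * r + a : ℕ) : k) • xa r) →
      (∀ r, Hm (xb r) = ((2 * r + b : ℕ) : k) • xb r) →
      a % 2 ≠ b % 2 →
      ∀ r, r < L → piL Hm L (2 * r + a)
        ((∑ r' ∈ Finset.range L, xa r') + (∑ r' ∈ Finset.range L, xb r')) = xa r := by
    intro a b xa xb ha hb hab r hr
    rw [map_add, map_sum, map_sum]
    have h1 : ∑ r' ∈ Finset.range L, piL Hm L (2 * r + a) (xa r') = xa r := by
      rw [Finset.sum_eq_single_of_mem r (Finset.mem_range.mpr hr)]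
      · rw [hπeigvec _ _ _ (ha r)]
        by_cases hL2 : 2 * r + a < L
        · rw [if_pos ⟨rfl, hL2⟩]
        · rw [if_neg (by tauto)]
          have hmem2 : xa r ∈ Module.End.eigenspace Hm ((2 * r + a : ℕ) : k) :=
            Module.End.mem_eigenspace_iff.mpr (ha r)
          rw [hM' _ (by omega)] at hmem2
          exact ((Submodule.mem_bot k).mp hmem2).symm
      · intro r' _ hne
        rw [hπeigvec _ _ _ (ha r')]
        exact if_neg (by rintro ⟨he, _⟩; omega)
    have h2 : ∑ r' ∈ Finset.range L, piL Hm L (2 * r + a) (xb r') = 0 := by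
      apply Finset.sum_eq_zero
      intro r' _
      rw [hπeigvec _ _ _ (hb r')]
      exact if_neg (by rintro ⟨he, _⟩; omega)
    rw [h1, h2, add_zero]
  -- surjectivity
  have hsurj : ∀ y0 : V, Hm y0 = ((0 : ℕ) : k) • y0 → ∀ y1 : V, Hm y1 = ((1 : ℕ) : k) • y1 →
      ∃ v : V, E v = 0 ∧ A 0 v = y0 ∧ A 1 v = y1 := by
    intro y0 hy0 y1 hy1
    have hEpow : ∀ (ε : ℕ) (y : V), Hm y = ((ε : ℕ) : k) • y → (E ^ M) y = 0 := by
      intro ε y hy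
      by_contra hne
      have heig := h.E_pow_eig hy M
      have hmem2 : (E ^ M) y ∈ Module.End.eigenspace Hm ((2 * M + ε : ℕ) : k) := by
        rw [Module.End.mem_eigenspace_iff, heig]
        congr 1
        push_cast
        ring
      rw [hM' (2 * M + ε) (by omega)] at hmem2
      exact hne ((Submodule.mem_bot k).mp hmem2)
    obtain ⟨x0, hx0mem, hx0sum⟩ := h.build 0 M L hM' hML M y0 hy0 (hEpow 0 y0 hy0)
    obtain ⟨x1, hx1mem, hx1sum⟩ := h.build 1 M L hM' hML M y1 hy1 (hEpow 1 y1 hy1)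
    refine ⟨(∑ r ∈ Finset.range L, x0 r) + (∑ r ∈ Finset.range L, x1 r), ?_, ?_, ?_⟩
    · rw [map_add, map_sum, map_sum, Finset.sum_eq_zero (fun r _ => (hx0mem r).1),
        Finset.sum_eq_zero (fun r _ => (hx1mem r).1), add_zero]
    · rw [hAapply, hx0sum]
      apply Finset.sum_congr rfl
      intro r hr
      rw [claim 0 1 x0 x1 (fun r => (hx0mem r).2) (fun r => (hx1mem r).2) (by omega) r
        (Finset.mem_range.mp hr)]
    · rw [hAapply, hx1sum]
      apply Finset.sum_congr rfl
      intro r hr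
      rw [add_comm (∑ r ∈ Finset.range L, x0 r), claim 1 0 x1 x0 (fun r => (hx1mem r).2)
        (fun r => (hx0mem r).2) (by omega) r (Finset.mem_range.mp hr)]
  -- assemble
  apply finrank_eq_of_maps (LinearMap.ker E) _ _ (A 0) (A 1)
  · intro v hv
    have := hmem 0 v (LinearMap.mem_ker.mp hv)
    rwa [Nat.cast_zero] at this
  · intro v hv
    have := hmem 1 v (LinearMap.mem_ker.mp hv)
    rwa [Nat.cast_one] at this
  · intro v hv
    exact hinj v (LinearMap.mem_ker.mp hv)
  · intro y0 hy0 y1 hy1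
    rw [Module.End.mem_eigenspace_iff] at hy0 hy1
    obtain ⟨v, hv, hA0, hA1⟩ := hsurj y0 (by rw [Nat.cast_zero]; exact hy0) y1
      (by rw [Nat.cast_one]; exact hy1)
    exact ⟨v, LinearMap.mem_ker.mpr hv, hA0, hA1⟩

end Sl2Work

/-- For an `sl2`-triple `(e, H, f)` in a finite-dimensional Lie algebra over a field of
characteristic zero, `dim ker (ad e) = dim g(0) + dim g(1)`. -/
theorem stmt4 {k g : Type*} [Field k] [CharZero k] [LieRing g] [LieAlgebra k g]
    [FiniteDimensional k g]
    (e H f : g)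
    (he : ⁅H, e⁆ = (2 : k) • e)
    (hf : ⁅H, f⁆ = (-2 : k) • f)
    (hef : ⁅e, f⁆ = H) :
    Module.finrank k ↥(LinearMap.ker (LieAlgebra.ad k g e)) =
      Module.finrank k ↥(Module.End.eigenspace (LieAlgebra.ad k g H) (0 : k)) +
        Module.finrank k ↥(Module.End.eigenspace (LieAlgebra.ad k g H) (1 : k)) := by
  have hrel : Sl2Work.Rel (LieAlgebra.ad k g e) (LieAlgebra.ad k g H) (LieAlgebra.ad k g f) := by
    letI : LieRing (Module.End k g) := LieRing.ofAssociativeRing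
    letI : LieAlgebra k (Module.End k g) := LieAlgebra.ofAssociativeAlgebra
    constructor
    · have h1 := LieHom.map_lie (LieAlgebra.ad k g) H e
      rw [he, map_smul, Ring.lie_def] at h1
      exact sub_eq_iff_eq_add'.mp h1.symm
    · have h2 := LieHom.map_lie (LieAlgebra.ad k g) H f
      rw [hf, map_smul, Ring.lie_def] at h2
      have h3 := sub_eq_iff_eq_add'.mp h2.symm
      rwa [neg_smul, ← sub_eq_add_neg] at h3
    · have h4 := LieHom.map_lie (LieAlgebra.ad k g) e f
      rw [hef, Ring.lie_def] at h4
      exact sub_eq_iff_eq_add'.mp h4.symm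
  exact hrel.main
end

section
/- Let g be a finite-dimensional Lie algebra over a field k of characteristic zero equipped with a nondegenerate invariant symmetric bilinear form B, and let (e,h,f) be an sl2-triple in g. Define ω_e(x,y) := B(e, [x,y]) for x, y ∈ g(-1) = {x : [h,x] = -x}. Then ω_e is an alternating bilinear form on g(-1) which is nondegenerate; in particular dim g(-1) is even. -/
open LieAlgebra LieModule Module Finset

section Aux

variable {k g : Type*} [Field k] [CharZero k] [LieRing g] [LieAlgebra k g]

private lemma adpow_succ (x : g) (n : ℕ) (y : g) :
    ((ad k g x) ^ (n + 1)) y = ⁅x, ((ad k g x) ^ n) y⁆ := by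
  rw [pow_succ', Module.End.mul_apply, ad_apply]

/-- chain lemma for powers of `ad x` where `⁅H, x⁆ = c • x`. -/
private lemma adH_pow (H x : g) (c : k) (hx : ⁅H, x⁆ = c • x)
    (ν : k) (z₀ m : g) (hm : ⁅H, m⁆ = ν • m + z₀) (j : ℕ) :
    ⁅H, ((ad k g x) ^ j) m⁆ = (ν + j * c) • ((ad k g x) ^ j) m + ((ad k g x) ^ j) z₀ := by
  induction j with
  | zero => simpa using hm
  | succ j ih =>
    simp only [adpow_succ]
    rw [leibniz_lie H x, hx, ih, lie_add, lie_smul, smul_lie]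
    match_scalars <;> push_cast <;> ring

private lemma masterE (e H f : g) (hef : ⁅e, f⁆ = H) (hf : ⁅H, f⁆ = (-2 : k) • f)
    (μ : k) (z₀ m : g) (hm : ⁅H, m⁆ = μ • m + z₀) (n : ℕ) :
    ⁅e, ((ad k g f) ^ (n + 1)) m⁆ =
      ((ad k g f) ^ (n + 1)) ⁅e, m⁆ + (((n : k) + 1) * (μ - n)) • ((ad k g f) ^ n) m
        + ((n : k) + 1) • ((ad k g f) ^ n) z₀ := by
  induction n with
  | zero =>
    simp only [adpow_succ, pow_zero, Module.End.one_apply]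
    rw [leibniz_lie e f, hef, hm]
    match_scalars <;> push_cast <;> ring
  | succ n ih =>
    rw [adpow_succ f (n + 1), leibniz_lie e f, hef, ih,
      adH_pow H f (-2 : k) hf μ z₀ m hm (n + 1)]
    simp only [lie_add, lie_smul, ← adpow_succ]
    match_scalars <;> push_cast <;> ring

private lemma no_infinite_eigen [FiniteDimensional k g] (H : g) (v : ℕ → g) (c : ℕ → k)
    (hv : ∀ i, ⁅H, v i⁆ = c i • v i) (hvne : ∀ i, v i ≠ 0)
    (hc : Function.Injective c) : False := by
  have h := (ad k g H).eigenvectors_linearIndependent' c hc v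
    (fun i => Module.End.hasEigenvector_iff.mpr
      ⟨Module.End.mem_eigenspace_iff.mpr (by rw [ad_apply, hv i]), hvne i⟩)
  have := h.finite_of_isNoetherian
  exact not_finite ℕ

private lemma exists_chain_zero [FiniteDimensional k g] (H : g) (v : ℕ → g) (c : ℕ → k)
    (hv : ∀ i, ⁅H, v i⁆ = c i • v i) (hc : Function.Injective c) : ∃ N, v N = 0 := by
  by_contra h
  push_neg at h
  exact no_infinite_eigen H v c hv h hc


private lemma cast_ne (n : ℕ) (hn : n ≠ 0) : (n : k) ≠ 0 := Nat.cast_ne_zero.mpr hn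

/-- Correct `u'` so that it is killed by `e`, keeping `⁅H, u''⁆ = n₀ • u'' + z'`. -/
private lemma exists_corrector [FiniteDimensional k g] (e H f : g)
    (he : ⁅H, e⁆ = (2 : k) • e) (hf : ⁅H, f⁆ = (-2 : k) • f) (hef : ⁅e, f⁆ = H)
    (n₀ : ℕ) (z' u' : g)
    (hu : ⁅H, u'⁆ = (n₀ : k) • u' + z') (hze : ⁅e, z'⁆ = 0) :
    ∃ u'', ⁅H, u''⁆ = (n₀ : k) • u'' + z' ∧ ⁅e, u''⁆ = 0 := by
  set μ : k := (n₀ : k) with hμ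
  set w : ℕ → g := fun i => ((ad k g e) ^ i) ⁅e, u'⁆ with hwdef
  have hw0 : ⁅H, ⁅e, u'⁆⁆ = (μ + 2) • ⁅e, u'⁆ + 0 := by
    rw [leibniz_lie H e, he, hu, lie_add, lie_smul, hze, smul_lie]
    match_scalars <;> ring
  have hw : ∀ i, ⁅H, w i⁆ = (μ + 2 + 2 * i) • w i := by
    intro i
    have := adH_pow H e (2 : k) he (μ + 2) 0 ⁅e, u'⁆ hw0 i
    rw [map_zero, add_zero] at this
    rw [hwdef, this]
    match_scalars <;> ring
  have hwsucc : ∀ i, w (i + 1) = ⁅e, w i⁆ := fun i => adpow_succ e i ⁅e, u'⁆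
  obtain ⟨N, hN⟩ : ∃ N, w N = 0 := by
    refine exists_chain_zero H w (fun i => μ + 2 + 2 * i) hw ?_
    intro i j hij
    have h2 : (i : k) = j := by
      have : (2 : k) * i = 2 * j := by linear_combination hij
      field_simp at this
      exact_mod_cast this
    exact_mod_cast h2
  have hμcast : ∀ a : ℕ, μ + a = ((n₀ + a : ℕ) : k) := by
    intro a; rw [hμ]; push_cast; ring
  have hμne : ∀ a : ℕ, a ≠ 0 → μ + a ≠ 0 := fun a ha => by
    rw [hμcast a]; exact cast_ne _ (by omega)
  set γ : ℕ → k := fun i => Nat.rec ((μ + 2)⁻¹)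
    (fun i γi => -γi * (((i : k) + 2) * (μ + 3 + i))⁻¹) i with hγ
  have hγ0 : γ 0 * (μ + 2) = 1 := by
    rw [hγ]
    exact inv_mul_cancel₀ (by simpa using hμne 2 (by omega))
  have hγsucc : ∀ i, γ (i + 1) * (((i : k) + 2) * (μ + 3 + i)) = -γ i := by
    intro i
    have hne : ((i : k) + 2) * (μ + 3 + i) ≠ 0 := by
      refine mul_ne_zero ?_ ?_
      · have : ((i : k) + 2) = ((i + 2 : ℕ) : k) := by push_cast; ring
        rw [this]; exact cast_ne _ (by omega)
      · have : μ + 3 + i = μ + ((3 + i : ℕ) : k) := by push_cast; ring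
        rw [this]; exact hμne _ (by omega)
    show -γ i * (((i : k) + 2) * (μ + 3 + i))⁻¹ * (((i : k) + 2) * (μ + 3 + i)) = -γ i
    rw [mul_assoc, inv_mul_cancel₀ hne, mul_one]
  set c : g := ∑ i ∈ Finset.range N, γ i • ((ad k g f) ^ (i + 1)) (w i) with hc
  have hterm_H : ∀ i, ⁅H, γ i • ((ad k g f) ^ (i + 1)) (w i)⁆
      = μ • (γ i • ((ad k g f) ^ (i + 1)) (w i)) := by
    intro i
    have h1 : ⁅H, w i⁆ = (μ + 2 + 2 * i) • w i + 0 := by rw [add_zero]; exact hw i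
    have := adH_pow H f (-2 : k) hf (μ + 2 + 2 * i) 0 (w i) h1 (i + 1)
    rw [map_zero, add_zero] at this
    rw [lie_smul, this, smul_smul, smul_smul]
    congr 1
    push_cast
    ring
  have hHc : ⁅H, c⁆ = μ • c := by
    have h1 : (ad k g H) c = μ • c := by
      rw [hc, map_sum, Finset.smul_sum]
      simp only [ad_apply]
      exact Finset.sum_congr rfl fun i _ => hterm_H i
    rw [← ad_apply (R := k), h1]
  -- the telescoping function
  set R : ℕ → g := fun j => Nat.rec (-⁅e, u'⁆)
    (fun i _ => γ i • ((ad k g f) ^ (i + 1)) (w (i + 1))) j with hR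
  have hRsucc : ∀ m : ℕ, R (m + 1) = γ m • ((ad k g f) ^ (m + 1)) (w (m + 1)) := fun m => rfl
  have hR0 : R 0 = -⁅e, u'⁆ := rfl
  have hw00 : w 0 = ⁅e, u'⁆ := by simp [hwdef]
  have hterm_e : ∀ i, ⁅e, γ i • ((ad k g f) ^ (i + 1)) (w i)⁆ = R (i + 1) - R i := by
    intro i
    have h1 : ⁅H, w i⁆ = (μ + 2 + 2 * i) • w i + 0 := by rw [add_zero]; exact hw i
    have hmE := masterE e H f hef hf (μ + 2 + 2 * i) 0 (w i) h1 i
    rw [map_zero, smul_zero, add_zero, ← hwsucc i] at hmE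
    cases i with
    | zero =>
      rw [hRsucc 0, hR0]
      simp only [pow_zero, Module.End.one_apply, zero_add, Nat.cast_zero, hw00] at hmE ⊢
      rw [lie_smul, hmE]
      match_scalars <;> push_cast <;> first | ring1 | linear_combination hγ0
    | succ j =>
      rw [lie_smul, hmE, hRsucc (j + 1), hRsucc j]
      match_scalars <;> push_cast <;> first | ring1 | linear_combination hγsucc j
  have hec : ⁅e, c⁆ = ⁅e, u'⁆ := by
    have h1 : (ad k g e) c = ⁅e, u'⁆ := by
      rw [hc, map_sum]
      simp only [ad_apply]
      rw [Finset.sum_congr rfl (fun i _ => hterm_e i), Finset.sum_range_sub R, hR0]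
      have hRN : R N = 0 := by
        cases N with
        | zero => rw [hR0, ← hw00, hN, neg_zero]
        | succ m => rw [hRsucc m, hN, map_zero, smul_zero]
      rw [hRN]
      abel
    rw [← ad_apply (R := k), h1]
  refine ⟨u' - c, ?_, ?_⟩
  · rw [lie_sub, hu, hHc, smul_sub]
    abel
  · rw [lie_sub, hec, sub_self]

private lemma lemA [FiniteDimensional k g] (e H f : g)
    (hf : ⁅H, f⁆ = (-2 : k) • f) (hef : ⁅e, f⁆ = H) (t : IsSl2Triple H e f)
    (n₀ : ℕ) (z' u'' : g)
    (hz : ⁅H, z'⁆ = (n₀ : k) • z') (hze : ⁅e, z'⁆ = 0) (hz0 : z' ≠ 0)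
    (hu : ⁅H, u''⁆ = (n₀ : k) • u'' + z') (hue : ⁅e, u''⁆ = 0) : False := by
  have P : t.HasPrimitiveVectorWith z' (n₀ : k) := ⟨hz0, hz, hze⟩
  have top : ((ad k g f) ^ (n₀ + 1)) z' = 0 := P.pow_toEnd_f_eq_zero_of_eq_nat rfl
  have bot : ((ad k g f) ^ n₀) z' ≠ 0 := P.pow_toEnd_f_ne_zero_of_eq_nat rfl le_rfl
  have hz_zero : ∀ j : ℕ, ((ad k g f) ^ (n₀ + 1 + j)) z' = 0 := by
    intro j
    rw [add_comm (n₀ + 1) j, pow_add, Module.End.mul_apply, top, map_zero]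
  have key : ∀ n : ℕ, ⁅e, ((ad k g f) ^ (n + 1)) u''⁆
      = (((n : k) + 1) * ((n : k) - n₀)) • (-(((ad k g f) ^ n) u''))
        + ((n : k) + 1) • ((ad k g f) ^ n) z' := by
    intro n
    have hthis := masterE e H f hef hf (n₀ : k) z' u'' hu n
    rw [hue, map_zero] at hthis
    rw [hthis]
    match_scalars <;> push_cast <;> ring
  have hv_ne : ∀ j, ((ad k g f) ^ (n₀ + 1 + j)) u'' ≠ 0 := by
    intro j
    induction j with
    | zero =>
      intro hcon
      have h0 := key n₀
      rw [show n₀ + 1 + 0 = n₀ + 1 from rfl] at hcon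
      rw [hcon, lie_zero, sub_self, mul_zero, zero_smul, zero_add] at h0
      rcases smul_eq_zero.mp h0.symm with h | h
      · have : ((n₀ + 1 : ℕ) : k) = 0 := by push_cast; linear_combination h
        exact cast_ne _ (by omega) this
      · exact bot h
    | succ j ih =>
      intro hcon
      have h0 := key (n₀ + 1 + j)
      rw [show n₀ + 1 + j + 1 = n₀ + 1 + (j + 1) from by omega] at h0
      rw [hcon, lie_zero, hz_zero j, smul_zero, add_zero] at h0
      rcases smul_eq_zero.mp h0.symm with h | h
      · rcases mul_eq_zero.mp h with h' | h'
        · have : ((n₀ + 1 + j + 1 : ℕ) : k) = 0 := by push_cast at h' ⊢; linear_combination h'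
          exact cast_ne _ (by omega) this
        · have : ((j + 1 : ℕ) : k) = 0 := by push_cast at h' ⊢; linear_combination h'
          exact cast_ne _ (by omega) this
      · exact ih (neg_eq_zero.mp h)
  have hv_eigen : ∀ j : ℕ, ⁅H, ((ad k g f) ^ (n₀ + 1 + j)) u''⁆
      = ((n₀ : k) - 2 * ((n₀ + 1 + j : ℕ) : k)) • ((ad k g f) ^ (n₀ + 1 + j)) u'' := by
    intro j
    have hthis := adH_pow H f (-2 : k) hf (n₀ : k) z' u'' hu (n₀ + 1 + j)
    rw [hz_zero j, add_zero] at hthis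
    rw [hthis]
    match_scalars <;> push_cast <;> ring
  refine no_infinite_eigen H (fun j => ((ad k g f) ^ (n₀ + 1 + j)) u'')
    (fun j => ((n₀ : k) - 2 * ((n₀ + 1 + j : ℕ) : k))) hv_eigen hv_ne ?_
  intro i j hij
  have : ((i : k)) = j := by push_cast at hij; linear_combination (-1/2 : k) * hij
  exact_mod_cast this

end Aux

private lemma part2_core {k g : Type*} [Field k] [CharZero k] [LieRing g] [LieAlgebra k g]
    [FiniteDimensional k g]
    (B : g →ₗ[k] g →ₗ[k] k)
    (hsymm : ∀ a b : g, B a b = B b a)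
    (hinv : ∀ a b c : g, B ⁅a, b⁆ c = B a ⁅b, c⁆)
    (hnondeg : ∀ a : g, (∀ b : g, B a b = 0) → a = 0)
    (e H f : g)
    (he : ⁅H, e⁆ = (2 : k) • e)
    (hf : ⁅H, f⁆ = (-2 : k) • f)
    (hef : ⁅e, f⁆ = H)
    (t : IsSl2Triple H e f)
    (inj_e : ∀ x : g, ⁅H, x⁆ = -x → ⁅e, x⁆ = 0 → x = 0)
    (inj_f : ∀ x : g, ⁅H, x⁆ = x → ⁅f, x⁆ = 0 → x = 0)
    (x : g) (hxH : ⁅H, x⁆ = -x) (hx0 : x ≠ 0)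
    (hcon : ∀ y ∈ Module.End.eigenspace (LieAlgebra.ad k g H) (-1 : k), B e ⁅x, y⁆ = 0) :
    False := by
  set V := Module.End.eigenspace (ad k g H) (-1 : k) with hV
  have hmemV : ∀ w : g, w ∈ V ↔ ⁅H, w⁆ = -w := by
    intro w; rw [hV, Module.End.mem_eigenspace_iff, ad_apply, neg_one_smul]
  have hup : ∀ y : g, ⁅H, y⁆ = -y → ⁅H, ⁅e, y⁆⁆ = ⁅e, y⁆ := by
    intro y hy
    rw [leibniz_lie, he, hy, smul_lie, lie_neg]
    module
  have hdown : ∀ w : g, ⁅H, w⁆ = w → ⁅H, ⁅f, w⁆⁆ = -⁅f, w⁆ := by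
    intro w hw
    rw [leibniz_lie, hf, hw, smul_lie]
    module
  have hzH : ⁅H, ⁅e, x⁆⁆ = ⁅e, x⁆ := hup x hxH
  have hz0 : ⁅e, x⁆ ≠ 0 := fun h => hx0 (inj_e x hxH h)
  have horto : ∀ y ∈ V, B y ⁅e, x⁆ = 0 := by
    intro y hy
    rw [hsymm y ⁅e, x⁆, hinv e x y]
    exact hcon y hy
  have hrefl : B.IsRefl := fun a b h => by rw [hsymm]; exact h
  have hndB : LinearMap.BilinForm.Nondegenerate B :=
    (LinearMap.IsRefl.nondegenerate_iff_separatingLeft hrefl).mpr fun a ha => hnondeg a ha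
  set S : Module.End k g := ad k g H - 1 with hS
  have hkerS : ∀ w : g, w ∈ LinearMap.ker S ↔ ⁅H, w⁆ = w := by
    intro w
    rw [LinearMap.mem_ker, hS, LinearMap.sub_apply, Module.End.one_apply, sub_eq_zero, ad_apply]
  have h1 : Module.finrank k V ≤ Module.finrank k (LinearMap.ker S) := by
    have hmap : ∀ y : V, ((ad k g e).comp V.subtype) y ∈ LinearMap.ker S := by
      intro y
      rw [LinearMap.comp_apply, Submodule.coe_subtype, ad_apply, hkerS]
      exact hup y ((hmemV y).mp y.2)
    refine LinearMap.finrank_le_finrank_of_injective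
      (f := LinearMap.codRestrict _ ((ad k g e).comp V.subtype) hmap) ?_
    rw [← LinearMap.ker_eq_bot, LinearMap.ker_eq_bot']
    intro y hy
    have : ⁅e, (y : g)⁆ = 0 := by
      have := congrArg (Subtype.val) hy
      simpa [ad_apply] using this
    exact Subtype.ext (inj_e y ((hmemV y).mp y.2) this)
  have h2 : Module.finrank k (LinearMap.ker S) ≤ Module.finrank k V := by
    have hmap : ∀ w : LinearMap.ker S, ((ad k g f).comp (LinearMap.ker S).subtype) w ∈ V := by
      intro w
      rw [LinearMap.comp_apply, Submodule.coe_subtype, ad_apply, hmemV]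
      exact hdown w ((hkerS w).mp w.2)
    refine LinearMap.finrank_le_finrank_of_injective
      (f := LinearMap.codRestrict _ ((ad k g f).comp (LinearMap.ker S).subtype) hmap) ?_
    rw [← LinearMap.ker_eq_bot, LinearMap.ker_eq_bot']
    intro w hw
    have : ⁅f, (w : g)⁆ = 0 := by
      have := congrArg (Subtype.val) hw
      simpa [ad_apply] using this
    exact Subtype.ext (inj_f w ((hkerS w).mp w.2) this)
  have hdim : Module.finrank k (LinearMap.ker S) = Module.finrank k V := le_antisymm h2 h1
  have horthsub : LinearMap.range S ≤ LinearMap.BilinForm.orthogonal B V := by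
    rintro _ ⟨v, rfl⟩
    rw [LinearMap.BilinForm.mem_orthogonal_iff]
    intro y hy
    have hyH : ⁅y, H⁆ = y := by rw [← lie_skew, (hmemV y).mp hy, neg_neg]
    show B y (S v) = 0
    rw [hS, LinearMap.sub_apply, Module.End.one_apply, map_sub, ad_apply, ← hinv y H v, hyH,
      sub_self]
  have hrange_eq : LinearMap.range S = LinearMap.BilinForm.orthogonal B V := by
    apply Submodule.eq_of_le_of_finrank_eq horthsub
    rw [LinearMap.BilinForm.finrank_orthogonal hndB V]
    have h3 := LinearMap.finrank_range_add_finrank_ker S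
    have h4 : Module.finrank k V ≤ Module.finrank k g := Submodule.finrank_le V
    omega
  have hzmem : ⁅e, x⁆ ∈ LinearMap.range S := by
    rw [hrange_eq]
    exact LinearMap.BilinForm.mem_orthogonal_iff.mpr fun y hy => horto y hy
  obtain ⟨u, hu⟩ := hzmem
  have huH : ⁅H, u⁆ = (1 : k) • u + ⁅e, x⁆ := by
    rw [hS, LinearMap.sub_apply, Module.End.one_apply, ad_apply, sub_eq_iff_eq_add] at hu
    rw [hu, one_smul]
    abel
  have hzchain : ∀ j : ℕ,
      ⁅H, ((ad k g e) ^ j) ⁅e, x⁆⁆ = ((1 : k) + 2 * j) • ((ad k g e) ^ j) ⁅e, x⁆ := by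
    intro j
    have h0 : ⁅H, ⁅e, x⁆⁆ = (1 : k) • ⁅e, x⁆ + 0 := by rw [one_smul, add_zero]; exact hzH
    have hthis := adH_pow H e (2 : k) he (1 : k) 0 ⁅e, x⁆ h0 j
    rw [map_zero, add_zero] at hthis
    rw [hthis]
    match_scalars <;> ring
  obtain ⟨N, hNz⟩ : ∃ N, ((ad k g e) ^ N) ⁅e, x⁆ = 0 := by
    refine exists_chain_zero H _ (fun j => (1 : k) + 2 * j) hzchain ?_
    intro i j hij
    have : ((i : k)) = j := by push_cast at hij; linear_combination (1/2 : k) * hij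
    exact_mod_cast this
  obtain ⟨m, hm1, hm2⟩ := Nat.exists_not_and_succ_of_not_zero_of_exists
    (p := fun n => ((ad k g e) ^ n) ⁅e, x⁆ = 0) (by simpa using hz0) ⟨N, hNz⟩
  have hz'e : ⁅e, ((ad k g e) ^ m) ⁅e, x⁆⁆ = 0 := by rw [← adpow_succ]; exact hm2
  have hu'H : ⁅H, ((ad k g e) ^ m) u⁆
      = ((1 : k) + 2 * m) • ((ad k g e) ^ m) u + ((ad k g e) ^ m) ⁅e, x⁆ := by
    have hthis := adH_pow H e (2 : k) he (1 : k) ⁅e, x⁆ u huH m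
    rw [hthis]
    match_scalars <;> ring
  have P' : t.HasPrimitiveVectorWith (((ad k g e) ^ m) ⁅e, x⁆) ((1 : k) + 2 * m) :=
    ⟨hm1, hzchain m, hz'e⟩
  obtain ⟨n₀, hn₀⟩ := P'.exists_nat
  obtain ⟨u'', hu''H, hu''e⟩ := exists_corrector e H f he hf hef n₀
    (((ad k g e) ^ m) ⁅e, x⁆) (((ad k g e) ^ m) u) (by rw [← hn₀]; exact hu'H) hz'e
  exact lemA e H f hf hef t n₀ (((ad k g e) ^ m) ⁅e, x⁆) u''
    (by rw [← hn₀]; exact hzchain m) hz'e hm1 hu''H hu''e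

/-- For an `sl2`-triple `(e, H, f)` and a nondegenerate invariant symmetric form `B`, the form
`ω_e(x, y) = B e ⁅x, y⁆` on `g(-1)` is alternating and nondegenerate; in particular
`dim g(-1)` is even. -/
theorem stmt7 {k g : Type*} [Field k] [CharZero k] [LieRing g] [LieAlgebra k g]
    [FiniteDimensional k g]
    (B : g →ₗ[k] g →ₗ[k] k)
    (hsymm : ∀ a b : g, B a b = B b a)
    (hinv : ∀ a b c : g, B ⁅a, b⁆ c = B a ⁅b, c⁆)
    (hnondeg : ∀ a : g, (∀ b : g, B a b = 0) → a = 0)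
    (e H f : g)
    (he : ⁅H, e⁆ = (2 : k) • e)
    (hf : ⁅H, f⁆ = (-2 : k) • f)
    (hef : ⁅e, f⁆ = H) :
    (∀ x ∈ Module.End.eigenspace (LieAlgebra.ad k g H) (-1 : k), B e ⁅x, x⁆ = 0) ∧
    (∀ x ∈ Module.End.eigenspace (LieAlgebra.ad k g H) (-1 : k), x ≠ 0 →
      ∃ y ∈ Module.End.eigenspace (LieAlgebra.ad k g H) (-1 : k), B e ⁅x, y⁆ ≠ 0) ∧
    Even (Module.finrank k ↥(Module.End.eigenspace (LieAlgebra.ad k g H) (-1 : k))) := by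
  classical
  have part1 : ∀ x ∈ Module.End.eigenspace (LieAlgebra.ad k g H) (-1 : k), B e ⁅x, x⁆ = 0 :=
    fun x _ => by rw [lie_self, map_zero]
  by_cases hH : H = 0
  · have hVbot : Module.End.eigenspace (LieAlgebra.ad k g H) (-1 : k) = ⊥ := by
      ext w
      simp only [Module.End.mem_eigenspace_iff, ad_apply, hH, zero_lie, Submodule.mem_bot,
        neg_one_smul]
      constructor
      · intro h; simpa using (neg_eq_zero.mp h.symm)
      · rintro rfl; simp
    refine ⟨part1, ?_, ?_⟩
    · intro x hx hx0
      rw [hVbot, Submodule.mem_bot] at hx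
      exact absurd hx hx0
    · rw [hVbot]
      simp only [finrank_bot]
      exact Even.zero
  have t : IsSl2Triple H e f := by
    refine ⟨hH, hef, ?_, ?_⟩
    · rw [he]; exact (two_smul k e).trans (two_smul ℕ e).symm
    · rw [hf, neg_smul, neg_inj]; exact (two_smul k f).trans (two_smul ℕ f).symm
  have inj_e : ∀ x : g, ⁅H, x⁆ = -x → ⁅e, x⁆ = 0 → x = 0 := by
    intro x hx hex
    by_contra hx0
    have P : t.HasPrimitiveVectorWith x (-1 : k) := ⟨hx0, by rw [hx, neg_one_smul], hex⟩
    obtain ⟨n, hn⟩ := P.exists_nat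
    have : ((n + 1 : ℕ) : k) = 0 := by push_cast; linear_combination -hn
    exact cast_ne _ (by omega) this
  have inj_f : ∀ x : g, ⁅H, x⁆ = x → ⁅f, x⁆ = 0 → x = 0 := by
    intro x hx hfx
    by_contra hx0
    have P : t.symm.HasPrimitiveVectorWith x (-1 : k) :=
      ⟨hx0, by rw [neg_lie, hx, neg_one_smul], hfx⟩
    obtain ⟨n, hn⟩ := P.exists_nat
    have : ((n + 1 : ℕ) : k) = 0 := by push_cast; linear_combination -hn
    exact cast_ne _ (by omega) this
  have hmemV : ∀ w : g,
      w ∈ Module.End.eigenspace (LieAlgebra.ad k g H) (-1 : k) ↔ ⁅H, w⁆ = -w := by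
    intro w; rw [Module.End.mem_eigenspace_iff, ad_apply, neg_one_smul]
  have part2 : ∀ x ∈ Module.End.eigenspace (LieAlgebra.ad k g H) (-1 : k), x ≠ 0 →
      ∃ y ∈ Module.End.eigenspace (LieAlgebra.ad k g H) (-1 : k), B e ⁅x, y⁆ ≠ 0 := by
    intro x hx hx0
    by_contra hcon
    push_neg at hcon
    exact part2_core B hsymm hinv hnondeg e H f he hf hef t inj_e inj_f x
      ((hmemV x).mp hx) hx0 hcon
  refine ⟨part1, part2, ?_⟩
  set V := Module.End.eigenspace (LieAlgebra.ad k g H) (-1 : k) with hV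
  let ω : LinearMap.BilinForm k V := LinearMap.mk₂ k (fun a b : V => B e ⁅(a : g), (b : g)⁆)
    (fun a b c => by simp [add_lie, lie_add])
    (fun r a b => by simp [smul_lie, lie_smul])
    (fun a b c => by simp [add_lie, lie_add])
    (fun r a b => by simp [smul_lie, lie_smul])
  have hω : ∀ a b : V, ω a b = B e ⁅(a : g), (b : g)⁆ := fun a b => rfl
  have halt : ∀ a b : V, ω b a = -ω a b := by
    intro a b
    rw [hω, hω, ← lie_skew, map_neg]
  have hndω : ω.Nondegenerate := by
    refine (LinearMap.IsRefl.nondegenerate_iff_separatingLeft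
      (fun a b h => by rw [halt, h, neg_zero])).mpr ?_
    intro a ha
    by_contra ha0
    obtain ⟨y, hyV, hy⟩ := part2 (a : g) a.2 (by simpa using ha0)
    exact hy (by rw [← hω a ⟨y, hyV⟩]; exact ha ⟨y, hyV⟩)
  let b := Module.finBasis k V
  have hdet := (LinearMap.BilinForm.nondegenerate_iff_det_ne_zero b).mp hndω
  have hMT : (LinearMap.BilinForm.toMatrix b ω).transpose = -(LinearMap.BilinForm.toMatrix b ω) := by
    ext i j
    simp only [Matrix.transpose_apply, Matrix.neg_apply, LinearMap.BilinForm.toMatrix_apply]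
    exact halt (b i) (b j)
  have hdeteq : (LinearMap.BilinForm.toMatrix b ω).det
      = (-1 : k) ^ (Module.finrank k V) * (LinearMap.BilinForm.toMatrix b ω).det := by
    conv_lhs => rw [← Matrix.det_transpose, hMT]
    rw [Matrix.det_neg, Fintype.card_fin]
  have hpow : ((-1 : k)) ^ (Module.finrank k V) = 1 := by
    have h2 : ((-1 : k) ^ (Module.finrank k V) - 1)
        * (LinearMap.BilinForm.toMatrix b ω).det = 0 := by
      linear_combination -hdeteq
    rcases mul_eq_zero.mp h2 with h | h
    · exact sub_eq_zero.mp h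
    · exact absurd h hdet
  exact (neg_one_pow_eq_one_iff_even (by norm_num : (-1 : k) ≠ 1)).mp hpow
end

section
/- Let g be a finite-dimensional Lie algebra over a field k of characteristic zero with nondegenerate invariant symmetric form B, let (e,h,f) be an sl2-triple, and set g(i) = {x : [h,x] = i·x}. Let ℓ ⊂ g(-1) be a Lagrangian subspace for the symplectic form ω_e(x,y) = B(e,[x,y]) (i.e. ℓ is its own ω_e-orthogonal complement). Define u⁻ := ℓ ⊕ (⊕_{i ≤ -2} g(i)). Then u⁻ is a Lie subalgebra of g, and the linear functional ψ_e(x) := B(e,x) on u⁻ vanishes on all brackets: ψ_e([x,y]) = 0 for all x, y ∈ u⁻. Hence ψ_e is a Lie algebra character of u⁻. -/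
section Aux

variable {k g : Type*} [Field k] [LieRing g] [LieAlgebra k g]

private lemma lie_mem_eig {H x y : g} {μ ν : k}
    (hx : x ∈ Module.End.eigenspace (LieAlgebra.ad k g H) μ)
    (hy : y ∈ Module.End.eigenspace (LieAlgebra.ad k g H) ν) :
    ⁅x, y⁆ ∈ Module.End.eigenspace (LieAlgebra.ad k g H) (μ + ν) := by
  rw [Module.End.mem_eigenspace_iff, LieAlgebra.ad_apply] at hx hy ⊢
  rw [leibniz_lie, hx, hy, smul_lie, lie_smul, add_smul]

private def Tsp (k : Type*) {g : Type*} [Field k] [LieRing g] [LieAlgebra k g]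
    (H : g) (n : ℤ) : Submodule k g :=
  ⨆ i : ℤ, ⨆ _ : i ≤ n, Module.End.eigenspace (LieAlgebra.ad k g H) (i : k)

private lemma eig_le_Tsp (H : g) {i n : ℤ} (h : i ≤ n) :
    Module.End.eigenspace (LieAlgebra.ad k g H) (i : k) ≤ Tsp k H n :=
  le_iSup_of_le i (le_iSup (fun _ : i ≤ n =>
    Module.End.eigenspace (LieAlgebra.ad k g H) (i : k)) h)

private lemma Tsp_mono (H : g) {m n : ℤ} (h : m ≤ n) : Tsp k H m ≤ Tsp k H n :=
  iSup_le fun i => iSup_le fun hi => eig_le_Tsp H (hi.trans h)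

private lemma lie_Tsp (H : g) {m : ℤ} (n : ℤ) {x : g}
    (hx : x ∈ Module.End.eigenspace (LieAlgebra.ad k g H) ((m : ℤ) : k)) :
    ∀ y ∈ Tsp k H n, ⁅x, y⁆ ∈ Tsp k H (m + n) := by
  intro y hy
  have key : Tsp k H n ≤ Submodule.comap (LieAlgebra.ad k g x) (Tsp k H (m + n)) := by
    refine iSup_le fun j => iSup_le fun hj z hz => ?_
    simp only [Submodule.mem_comap, LieAlgebra.ad_apply]
    have h1 := lie_mem_eig hx hz
    rw [← Int.cast_add] at h1
    exact eig_le_Tsp H (by omega) h1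
  have := key hy
  rwa [Submodule.mem_comap, LieAlgebra.ad_apply] at this

private lemma Tsp_lie_Tsp (H : g) {m n : ℤ} {x y : g}
    (hx : x ∈ Tsp k H m) (hy : y ∈ Tsp k H n) : ⁅x, y⁆ ∈ Tsp k H (m + n) := by
  have key : Tsp k H m ≤ ⨅ z ∈ Tsp k H n,
      Submodule.comap (LieAlgebra.ad k g z) (Tsp k H (m + n)) := by
    refine iSup_le fun i => iSup_le fun hi w hw => ?_
    simp only [Submodule.mem_iInf, Submodule.mem_comap, LieAlgebra.ad_apply]
    intro z hz
    have h1 : ⁅w, z⁆ ∈ Tsp k H (i + n) := lie_Tsp H n hw z hz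
    have h2 : ⁅z, w⁆ = -⁅w, z⁆ := (lie_skew z w).symm
    rw [h2]
    exact (Tsp k H (m + n)).neg_mem (Tsp_mono H (by omega) h1)
  have := key hx
  simp only [Submodule.mem_iInf, Submodule.mem_comap, LieAlgebra.ad_apply] at this
  have h3 : ⁅x, y⁆ = -⁅y, x⁆ := (lie_skew x y).symm
  rw [h3]
  exact (Tsp k H (m + n)).neg_mem (this y hy)

private lemma B_e_eig_zero (B : g →ₗ[k] g →ₗ[k] k)
    (hinv : ∀ a b c : g, B ⁅a, b⁆ c = B a ⁅b, c⁆)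
    {e H x : g} (he : ⁅H, e⁆ = (2 : k) • e) {μ : k} (hμ : μ ≠ -2)
    (hx : x ∈ Module.End.eigenspace (LieAlgebra.ad k g H) μ) : B e x = 0 := by
  rw [Module.End.mem_eigenspace_iff, LieAlgebra.ad_apply] at hx
  have h1 := hinv e H x
  have h2 : ⁅e, H⁆ = -((2 : k) • e) := by rw [← lie_skew, he]
  rw [hx, h2] at h1
  simp only [map_neg, map_smul, LinearMap.neg_apply, LinearMap.smul_apply,
    smul_eq_mul] at h1
  have h3 : (μ + 2) * B e x = 0 := by linear_combination -h1
  rcases mul_eq_zero.mp h3 with h | h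
  · exact absurd (by linear_combination h) hμ
  · exact h

private lemma Tsp_le_ker [CharZero k] (B : g →ₗ[k] g →ₗ[k] k)
    (hinv : ∀ a b c : g, B ⁅a, b⁆ c = B a ⁅b, c⁆)
    {e H : g} (he : ⁅H, e⁆ = (2 : k) • e) {n : ℤ} (hn : n ≤ -3)
    {x : g} (hx : x ∈ Tsp k H n) : B e x = 0 := by
  have key : Tsp k H n ≤ LinearMap.ker (B e) := by
    refine iSup_le fun i => iSup_le fun hi w hw => ?_
    have hne : ((i : ℤ) : k) ≠ -2 := by
      intro h
      have : (i : ℤ) = -2 := by exact_mod_cast h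
      omega
    exact B_e_eig_zero B hinv he hne hw
  exact key hx

end Aux

/-- Let `ℓ ⊆ g(-1)` be a Lagrangian for `ω_e(x,y) = B e ⁅x,y⁆` and
`u⁻ = ℓ ⊕ (⊕_{i ≤ -2} g(i))`.  Then `u⁻` is a Lie subalgebra of `g` and the functional
`ψ_e = B e -` vanishes on all brackets of elements of `u⁻`. -/
theorem stmt8 {k g : Type*} [Field k] [CharZero k] [LieRing g] [LieAlgebra k g]
    [FiniteDimensional k g]
    (B : g →ₗ[k] g →ₗ[k] k)
    (hsymm : ∀ a b : g, B a b = B b a)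
    (hinv : ∀ a b c : g, B ⁅a, b⁆ c = B a ⁅b, c⁆)
    (hnondeg : ∀ a : g, (∀ b : g, B a b = 0) → a = 0)
    (e H f : g)
    (he : ⁅H, e⁆ = (2 : k) • e)
    (hf : ⁅H, f⁆ = (-2 : k) • f)
    (hef : ⁅e, f⁆ = H)
    (ℓ : Submodule k g)
    (hℓ : ℓ ≤ Module.End.eigenspace (LieAlgebra.ad k g H) (-1 : k))
    (hLag : ∀ x ∈ Module.End.eigenspace (LieAlgebra.ad k g H) (-1 : k),
      (x ∈ ℓ ↔ ∀ y ∈ ℓ, B e ⁅x, y⁆ = 0))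
    (u : Submodule k g)
    (hu : u = ℓ ⊔ ⨆ i : ℤ, ⨆ _ : i ≤ -2,
      Module.End.eigenspace (LieAlgebra.ad k g H) (i : k)) :
    (∀ x ∈ u, ∀ y ∈ u, ⁅x, y⁆ ∈ u) ∧ (∀ x ∈ u, ∀ y ∈ u, B e ⁅x, y⁆ = 0) := by
  have hu' : u = ℓ ⊔ Tsp k H (-2) := hu
  have hℓ' : ℓ ≤ Tsp k H (-1) := by
    refine le_trans hℓ ?_
    have hcast : ((-1 : ℤ) : k) = (-1 : k) := by norm_num
    rw [← hcast]
    exact eig_le_Tsp H le_rfl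
  have hu1 : u ≤ Tsp k H (-1) := by
    rw [hu']
    exact sup_le hℓ' (Tsp_mono H (by omega))
  constructor
  · intro x hx y hy
    have h1 : ⁅x, y⁆ ∈ Tsp k H ((-1) + (-1)) := Tsp_lie_Tsp H (hu1 hx) (hu1 hy)
    rw [hu']
    exact Submodule.mem_sup_right (Tsp_mono H (by omega) h1)
  · intro x hx y hy
    rw [hu'] at hx hy
    obtain ⟨a, ha, b, hb, rfl⟩ := Submodule.mem_sup.mp hx
    obtain ⟨c, hc, d, hd, rfl⟩ := Submodule.mem_sup.mp hy
    rw [add_lie, lie_add, lie_add]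
    simp only [map_add]
    have h1 : B e ⁅a, c⁆ = 0 := (hLag a (hℓ ha)).mp ha c hc
    have h2 : B e ⁅a, d⁆ = 0 :=
      Tsp_le_ker B hinv he (by omega) (Tsp_lie_Tsp H (hℓ' ha) hd)
    have h3 : B e ⁅b, c⁆ = 0 :=
      Tsp_le_ker B hinv he (by omega) (Tsp_lie_Tsp H hb (hℓ' hc))
    have h4 : B e ⁅b, d⁆ = 0 :=
      Tsp_le_ker B hinv he (by omega) (Tsp_lie_Tsp H hb hd)
    rw [h1, h2, h3, h4]
    ring
end

section
/- Let g be a finite-dimensional Lie algebra over an algebraically closed field k of characteristic zero. Suppose h, x ∈ g satisfy [h,x] = c·x for some nonzero scalar c ∈ k. Then ad x : g → g is a nilpotent endomorphism. -/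
open Module LinearMap Set

/-- If `⁅h, x⁆ = c • x` with `c ≠ 0` in a finite-dimensional Lie algebra over an
algebraically closed field of characteristic zero, then `ad x` is nilpotent. -/
theorem stmt10 {k g : Type*} [Field k] [IsAlgClosed k] [CharZero k]
    [LieRing g] [LieAlgebra k g] [FiniteDimensional k g]
    (h x : g) (c : k) (hc : c ≠ 0) (hx : ⁅h, x⁆ = c • x) :
    IsNilpotent (LieAlgebra.ad k g x) := by
  classical
  set A := LieAlgebra.ad k g h with hA
  set B := LieAlgebra.ad k g x with hB
  -- the basic commutation relation
  have key : ∀ μ : k, (A - (μ + c) • 1) * B = B * (A - μ • 1) := by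
    intro μ
    ext m
    have hcm : A (B m) - B (A m) = c • B m := by
      simp only [hA, hB, LieAlgebra.ad_apply]
      rw [← lie_lie, hx, smul_lie]
    simp only [Module.End.mul_apply, LinearMap.sub_apply, LinearMap.smul_apply,
      Module.End.one_apply, map_sub, map_smul]
    have : A (B m) = B (A m) + c • B m := by rw [← hcm]; abel
    rw [this, add_smul]
    abel
  -- powers of the commutation relation
  have keyn : ∀ (n : ℕ) (μ : k), (A - (μ + c) • 1) ^ n * B = B * (A - μ • 1) ^ n := by
    intro n μ
    induction n with
    | zero => simp
    | succ n ih =>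
      rw [pow_succ', pow_succ', mul_assoc, ih, ← mul_assoc, key, mul_assoc]
  -- B shifts maximal generalized eigenspaces of A
  have hmaps : ∀ μ : k, MapsTo B (A.maxGenEigenspace μ) (A.maxGenEigenspace (μ + c)) := by
    intro μ m hm
    simp only [SetLike.mem_coe, Module.End.mem_maxGenEigenspace] at hm ⊢
    obtain ⟨n, hn⟩ := hm
    refine ⟨n, ?_⟩
    have : ((A - (μ + c) • 1) ^ n * B) m = (B * (A - μ • 1) ^ n) m := by rw [keyn]
    simpa [Module.End.mul_apply, hn] using this
  have hmapsn : ∀ (n : ℕ) (μ : k),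
      MapsTo (B ^ n) (A.maxGenEigenspace μ) (A.maxGenEigenspace (μ + n • c)) := by
    intro n
    induction n with
    | zero => intro μ m hm; simpa using hm
    | succ n ih =>
      intro μ
      have h1 := (hmaps (μ + n • c)).comp (ih μ)
      have h2 : μ + n • c + c = μ + (n + 1) • c := by rw [succ_nsmul]; ring
      rw [h2] at h1
      intro m hm
      have := h1 hm
      simpa [pow_succ', Module.End.mul_apply] using this
  -- finitely many generalized eigenvalues
  have hfin : {μ : k | A.maxGenEigenspace μ ≠ ⊥}.Finite := by
    apply A.finite_hasEigenvalue.subset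
    intro μ hμ
    rw [Set.mem_setOf_eq, A.maxGenEigenspace_eq] at hμ
    exact Module.End.hasEigenvalue_of_hasGenEigenvalue hμ
  -- for each μ, some power of B kills the generalized eigenspace of μ
  have kill : ∀ μ : k, ∃ n : ℕ, ∀ m ∈ A.maxGenEigenspace μ, (B ^ n) m = 0 := by
    intro μ
    have hinj : Function.Injective fun n : ℕ => μ + n • c := by
      intro a b hab
      simp only [nsmul_eq_mul] at hab
      have : (a : k) = b := by
        have := add_left_cancel hab
        exact mul_right_cancel₀ hc this
      exact_mod_cast this
    by_contra hcon
    push_neg at hcon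
    have : ∀ n : ℕ, μ + n • c ∈ {ν : k | A.maxGenEigenspace ν ≠ ⊥} := by
      intro n
      obtain ⟨m, hm, hne⟩ := hcon n
      intro hbot
      have hmem := hmapsn n μ hm
      rw [hbot] at hmem
      exact hne (by simpa using hmem)
    exact (Set.infinite_of_injective_forall_mem hinj this) hfin
  -- conclude using the generalized eigenspace decomposition
  have htop : ⨆ μ : k, A.maxGenEigenspace μ = ⊤ := A.iSup_maxGenEigenspace_eq_top
  refine ((LinearMap.charpoly_nilpotent_tfae B).out 0 2).mpr ?_
  intro m
  have hm : m ∈ ⨆ μ : k, A.maxGenEigenspace μ := htop ▸ Submodule.mem_top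
  refine Submodule.iSup_induction _ (motive := fun m => ∃ n : ℕ, (B ^ n) m = 0) hm ?_ ⟨0, by simp⟩ ?_
  · intro μ m hm
    obtain ⟨n, hn⟩ := kill μ
    exact ⟨n, hn m hm⟩
  · rintro y z ⟨n, hn⟩ ⟨p, hp⟩
    refine ⟨p + n, ?_⟩
    rw [map_add]
    have h1 : (B ^ (p + n)) y = 0 := by rw [pow_add, Module.End.mul_apply, hn, map_zero]
    have h2 : (B ^ (p + n)) z = 0 := by rw [add_comm, pow_add, Module.End.mul_apply, hp, map_zero]
    rw [h1, h2, add_zero]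
end

section
/- Let k be a field of characteristic zero, K/k a field extension, and λ ∈ K transcendental over k. Let M be the K-vector space with basis {v_n}_{n ∈ ℤ}, regarded as a module over the ring k[t^{±1}] where t acts by t·v_n = v_{n+1}, and equipped additionally with a k-linear operator θ acting by θ·v_n = (λ + n)·v_n. Let g = Σ_{n} a_n v_n be any nonzero element with coefficients a_n ∈ K (finitely many nonzero). Then the smallest k[t^{±1}]-submodule of M containing g and stable under θ is not finitely generated as a k[t^{±1}]-module. -/
open Polynomial Finsupp Submodule

/-- Powers of a transcendental element are linearly independent. -/
theorem stmt13_aux_pow_li {k K : Type*} [Field k] [Field K] [Algebra k K] (x : K)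
    (h : Transcendental k x) : LinearIndependent k (fun j : ℕ => x ^ j) := by
  rw [linearIndependent_iff]
  intro l hl
  rw [Finsupp.linearCombination_apply] at hl
  have hp : (l.sum fun i c => (C c * X ^ i : k[X])) = 0 := by
    apply transcendental_iff.1 h
    rw [map_finsuppSum]
    simpa [Algebra.smul_def] using hl
  ext j
  have := congrArg (fun p => Polynomial.coeff p j) hp
  simp only [Finsupp.sum, Polynomial.finset_sum_coeff, Polynomial.coeff_C_mul,
    Polynomial.coeff_X_pow, mul_ite, mul_one, mul_zero, Polynomial.coeff_zero] at this
  rw [Finset.sum_ite_eq l.support j (fun i => l i)] at this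
  by_cases hj : j ∈ l.support
  · simpa [hj] using this
  · simpa using Finsupp.notMem_support_iff.1 hj

/-- Let `λ ∈ K` be transcendental over `k`, and let `M = ⊕_{n ∈ ℤ} K·v_n` carry the shift
operator `T : v_n ↦ v_{n+1}` (with inverse `T⁻¹`) and the operator `θ : v_n ↦ (λ+n)·v_n`.
For any nonzero `g ∈ M`, the smallest `k[t^{±1}]`-submodule of `M` containing `g` and stable
under `θ` is not finitely generated as a `k[t^{±1}]`-module. -/
theorem stmt13 {k K : Type*} [Field k] [CharZero k] [Field K] [Algebra k K]
    (lam : K) (hlam : Transcendental k lam)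
    (T Tinv θ : (ℤ →₀ K) →ₗ[k] (ℤ →₀ K))
    (hT : ∀ (n : ℤ) (a : K), T (Finsupp.single n a) = Finsupp.single (n + 1) a)
    (hTinv : ∀ (n : ℤ) (a : K), Tinv (Finsupp.single n a) = Finsupp.single (n - 1) a)
    (hθ : ∀ (n : ℤ) (a : K), θ (Finsupp.single n a) = Finsupp.single n ((lam + n) * a))
    (g : ℤ →₀ K) (hg : g ≠ 0)
    (N : Submodule k (ℤ →₀ K))
    (hgN : g ∈ N)
    (hTN : ∀ x ∈ N, T x ∈ N)
    (hTinvN : ∀ x ∈ N, Tinv x ∈ N)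
    (hθN : ∀ x ∈ N, θ x ∈ N)
    (hmin : ∀ N' : Submodule k (ℤ →₀ K), g ∈ N' → (∀ x ∈ N', T x ∈ N') →
      (∀ x ∈ N', Tinv x ∈ N') → (∀ x ∈ N', θ x ∈ N') → N ≤ N') :
    ¬ ∃ s : Finset (ℤ →₀ K), (↑s : Set (ℤ →₀ K)) ⊆ (N : Set (ℤ →₀ K)) ∧
      ∀ N' : Submodule k (ℤ →₀ K), (↑s : Set (ℤ →₀ K)) ⊆ (N' : Set (ℤ →₀ K)) →
        (∀ x ∈ N', T x ∈ N') → (∀ x ∈ N', Tinv x ∈ N') → N ≤ N' := by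
  classical
  rintro ⟨s, hsN, hs⟩
  -- pick a nonzero coordinate of g
  obtain ⟨n₀, hc⟩ : ∃ n₀ : ℤ, g n₀ ≠ 0 := by
    by_contra h
    push_neg at h
    exact hg (Finsupp.ext h)
  -- T, Tinv, θ are determined pointwise
  have hTapp : ∀ x : ℤ →₀ K, T x = Finsupp.equivMapDomain (Equiv.addRight (1 : ℤ)) x := by
    intro x
    induction x using Finsupp.induction with
    | zero => simp [Finsupp.equivMapDomain_zero]
    | single_add a b f _ _ ih =>
      ext m
      rw [map_add, ih, hT]
      simp only [Finsupp.add_apply, Finsupp.equivMapDomain_apply]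
      have hsymm : ((Equiv.addRight (1 : ℤ)).symm m) = m - 1 := rfl
      rw [hsymm]
      rcases eq_or_ne a (m - 1) with ha' | ha'
      · rw [Finsupp.single_apply, if_pos (by omega : a + 1 = m),
          Finsupp.single_apply, if_pos ha']
      · rw [Finsupp.single_apply, if_neg (by omega : ¬ a + 1 = m),
          Finsupp.single_apply, if_neg ha']
  have hTinvapp : ∀ x : ℤ →₀ K, Tinv x = Finsupp.equivMapDomain (Equiv.addRight (-1 : ℤ)) x := by
    intro x
    induction x using Finsupp.induction with
    | zero => simp [Finsupp.equivMapDomain_zero]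
    | single_add a b f _ _ ih =>
      ext m
      rw [map_add, ih, hTinv]
      simp only [Finsupp.add_apply, Finsupp.equivMapDomain_apply]
      have hsymm : ((Equiv.addRight (-1 : ℤ)).symm m) = m - (-1) := rfl
      rw [hsymm]
      rcases eq_or_ne a (m - (-1)) with ha' | ha'
      · rw [Finsupp.single_apply, if_pos (by omega : a - 1 = m),
          Finsupp.single_apply, if_pos ha']
      · rw [Finsupp.single_apply, if_neg (by omega : ¬ a - 1 = m),
          Finsupp.single_apply, if_neg ha']
  have hθapp : ∀ (x : ℤ →₀ K) (n : ℤ), θ x n = (lam + n) * x n := by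
    intro x
    induction x using Finsupp.induction with
    | zero => simp
    | single_add a b f _ _ ih =>
      intro n
      rw [map_add, Finsupp.add_apply, hθ, ih n, Finsupp.add_apply]
      rcases eq_or_ne a n with rfl | hne
      · rw [Finsupp.single_eq_same, Finsupp.single_eq_same]; ring
      · rw [Finsupp.single_eq_of_ne hne.symm, Finsupp.single_eq_of_ne hne.symm]
        ring
  -- the candidate submodule generated by all shifts of s
  set G : Set (ℤ →₀ K) :=
    ⋃ m : ℤ, (fun x => Finsupp.equivMapDomain (Equiv.addRight m) x) '' ↑s with hG
  set N' : Submodule k (ℤ →₀ K) := Submodule.span k G with hN'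
  have hGmem : ∀ (m : ℤ) (x : ℤ →₀ K), x ∈ s →
      Finsupp.equivMapDomain (Equiv.addRight m) x ∈ G := by
    intro m x hx
    exact Set.mem_iUnion.2 ⟨m, ⟨x, hx, rfl⟩⟩
  have hsN' : (↑s : Set (ℤ →₀ K)) ⊆ (N' : Set (ℤ →₀ K)) := by
    intro x hx
    apply Submodule.subset_span
    have : Finsupp.equivMapDomain (Equiv.addRight (0 : ℤ)) x = x := by
      ext m; simp [Finsupp.equivMapDomain_apply]; rfl
    rw [← this]
    exact hGmem 0 x hx
  have hTN' : ∀ x ∈ N', T x ∈ N' := by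
    intro x hx
    have hmap : Submodule.map T N' ≤ N' := by
      rw [hN', Submodule.map_span]
      apply Submodule.span_le.2
      rintro _ ⟨z, hz, rfl⟩
      apply Submodule.subset_span
      obtain ⟨m, x, hx, rfl⟩ : ∃ (m : ℤ) (y : ℤ →₀ K), y ∈ s ∧
          Finsupp.equivMapDomain (Equiv.addRight m) y = z := by
        simpa [hG, Set.mem_iUnion, eq_comm] using hz
      have : T (Finsupp.equivMapDomain (Equiv.addRight m) x)
          = Finsupp.equivMapDomain (Equiv.addRight (m + 1)) x := by
        rw [hTapp]
        ext a
        simp only [Finsupp.equivMapDomain_apply, Equiv.coe_addRight, Equiv.addRight_symm_apply]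
        congr 1
        ring
      rw [this]
      exact hGmem (m + 1) x hx
    exact hmap (Submodule.mem_map_of_mem hx)
  have hTinvN' : ∀ x ∈ N', Tinv x ∈ N' := by
    intro x hx
    have hmap : Submodule.map Tinv N' ≤ N' := by
      rw [hN', Submodule.map_span]
      apply Submodule.span_le.2
      rintro _ ⟨z, hz, rfl⟩
      apply Submodule.subset_span
      obtain ⟨m, x, hx, rfl⟩ : ∃ (m : ℤ) (y : ℤ →₀ K), y ∈ s ∧
          Finsupp.equivMapDomain (Equiv.addRight m) y = z := by
        simpa [hG, Set.mem_iUnion, eq_comm] using hz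
      have : Tinv (Finsupp.equivMapDomain (Equiv.addRight m) x)
          = Finsupp.equivMapDomain (Equiv.addRight (m - 1)) x := by
        rw [hTinvapp]
        ext a
        simp only [Finsupp.equivMapDomain_apply, Equiv.coe_addRight, Equiv.addRight_symm_apply]
        congr 1
        ring
      rw [this]
      exact hGmem (m - 1) x hx
    exact hmap (Submodule.mem_map_of_mem hx)
  have hNle : N ≤ N' := hs N' hsN' hTN' hTinvN'
  -- the finite set of all coefficient values of elements of s
  set F : Finset K := insert (0 : K) (s.biUnion fun x => x.support.image x) with hF
  -- every element of N' has n₀-coordinate in the span of F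
  have hW : ∀ y ∈ N', y n₀ ∈ Submodule.span k (↑F : Set K) := by
    intro y hy
    have hφ : Submodule.map (Finsupp.lapply (M := K) (R := k) n₀) N'
        ≤ Submodule.span k (↑F : Set K) := by
      rw [hN', Submodule.map_span]
      apply Submodule.span_le.2
      rintro _ ⟨z, hz, rfl⟩
      apply Submodule.subset_span
      obtain ⟨m, x, hx, rfl⟩ : ∃ (m : ℤ) (y : ℤ →₀ K), y ∈ s ∧
          Finsupp.equivMapDomain (Equiv.addRight m) y = z := by
        simpa [hG, Set.mem_iUnion, eq_comm] using hz
      have hval : Finsupp.lapply (M := K) (R := k) n₀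
          (Finsupp.equivMapDomain (Equiv.addRight m) x) = x (n₀ - m) := by
        simp [Finsupp.lapply, Finsupp.equivMapDomain_apply, sub_eq_add_neg]
      rw [hval]
      by_cases hsup : (n₀ - m) ∈ x.support
      · exact Finset.mem_insert.2 (Or.inr (Finset.mem_biUnion.2
          ⟨x, hx, Finset.mem_image.2 ⟨n₀ - m, hsup, rfl⟩⟩))
      · rw [Finsupp.notMem_support_iff.1 hsup]
        exact Finset.mem_insert_self 0 _
    exact hφ (Submodule.mem_map_of_mem hy)
  -- iterates of θ applied to g
  have hiter : ∀ j : ℕ, θ^[j] g ∈ N := by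
    intro j
    induction j with
    | zero => simpa using hgN
    | succ j ih => rw [Function.iterate_succ_apply']; exact hθN _ ih
  have hcoeff : ∀ j : ℕ, (θ^[j] g) n₀ = (lam + (n₀ : K)) ^ j * g n₀ := by
    intro j
    induction j with
    | zero => simp
    | succ j ih =>
      rw [Function.iterate_succ_apply', hθapp, ih, pow_succ]
      ring
  -- transcendence of lam + n₀
  have hμ : Transcendental k (lam + (n₀ : K)) := by
    have := hlam.aeval (X + C (n₀ : k)) (by rw [Polynomial.natDegree_X_add_C]; exact one_ne_zero) (by
      rw [Polynomial.leadingCoeff_X_add_C]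
      exact Submonoid.one_mem _)
    simpa [map_intCast] using this
  -- the independent family
  have hpow : LinearIndependent k (fun j : ℕ => (lam + (n₀ : K)) ^ j) := stmt13_aux_pow_li _ hμ
  have hcw : LinearIndependent k (fun j : ℕ => (lam + (n₀ : K)) ^ j * g n₀) := by
    have hker : LinearMap.ker (LinearMap.mulRight k (g n₀)) = ⊥ := by
      rw [LinearMap.ker_eq_bot]
      intro a b hab
      exact mul_right_cancel₀ hc hab
    exact hpow.map' (LinearMap.mulRight k (g n₀)) hker
  -- members of the finite-dimensional span
  have hmem : ∀ j : ℕ, (lam + (n₀ : K)) ^ j * g n₀ ∈ Submodule.span k (↑F : Set K) := by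
    intro j
    have := hW _ (hNle (hiter j))
    rwa [hcoeff j] at this
  set w : ℕ → Submodule.span k (↑F : Set K) := fun j => ⟨_, hmem j⟩ with hw
  have hwli : LinearIndependent k w := by
    apply LinearIndependent.of_comp (Submodule.span k (↑F : Set K)).subtype
    exact hcw
  exact Module.Finite.not_linearIndependent_of_infinite w hwli
end
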